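/- arXiv:1205.5788 — 8 statements merged into one kernel-verified Lean document; each statement's English description precedes it below -/
import Mathlib

section
/- Let Z have a Beta(m,n) distribution with positive integers m > n. Then P(Z < m/(m+n)) < 1/2, i.e., the mean of Z is strictly less than its median. -/
/-!
Write `N = m + n - 1`. Differentiating the binomial tail `x ↦ P(Bin(N, x) ≥ m)` telescopes to
`m * C(N, m) * x^(m-1) * (1-x)^(n-1)`, so `P(Z < x) = P(Bin(N, x) ≥ m)`. At `x = m / (m + n)`
the binomial probabilities are proportional to `w j = C(N, j) * m^j * n^(N-j)`. From the ratio
`w (j+1) / w j = (N - j) m / ((j + 1) n)` one gets `w (m + i) ≤ w (m - 1 - i)` for `i < n` by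
induction on `i`; as `m > n`, the weight `w 0 > 0` is left unpaired below `m`, so the tail
`j ≥ m` carries strictly less than half of the total mass `(m + n)^N`.
-/

open MeasureTheory ProbabilityTheory

/-- The Beta(m,n) density `z^(m-1) (1-z)^(n-1) / B(m,n)` on (0,1), where
`B(m,n) = Γ(m)Γ(n)/Γ(m+n)`. -/
noncomputable def betaPDFReal (m n : ℕ) (z : ℝ) : ℝ :=
  if z ∈ Set.Ioo (0 : ℝ) 1 then
    z ^ (m - 1) * (1 - z) ^ (n - 1) /
      (Real.Gamma m * Real.Gamma n / Real.Gamma (m + n))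
  else 0

open Finset

def binomialWeight (a b N j : ℕ) : ℕ := N.choose j * a ^ j * b ^ (N - j)

theorem sum_binomialWeight (a b N : ℕ) :
    ∑ j ∈ range (N + 1), binomialWeight a b N j = (a + b) ^ N := by
  rw [add_pow]
  exact sum_congr rfl fun j _ => by simp only [binomialWeight, Nat.cast_id]; ring

theorem binomialWeight_pos {a b N j : ℕ} (ha : 0 < a) (hb : 0 < b) (hj : j ≤ N) :
    0 < binomialWeight a b N j := by
  unfold binomialWeight
  have := Nat.choose_pos hj
  positivity

theorem binomialWeight_succ_mul (a b N j : ℕ) :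
    binomialWeight a b N (j + 1) * ((j + 1) * b) = binomialWeight a b N j * ((N - j) * a) := by
  unfold binomialWeight
  rcases lt_or_ge j N with hj | hj
  · obtain ⟨d, rfl⟩ : ∃ d, N = j + 1 + d := ⟨N - (j + 1), by omega⟩
    rw [show j + 1 + d - j = d + 1 by omega, show j + 1 + d - (j + 1) = d by omega]
    have := Nat.choose_succ_right_eq (j + 1 + d) j
    rw [show j + 1 + d - j = d + 1 by omega] at this
    calc _ = (j + 1 + d).choose (j + 1) * (j + 1) * (a ^ j * b ^ (d + 1)) * a := by ring
      _ = _ := by rw [this]; ring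
  · simp [Nat.choose_eq_zero_of_lt (show N < j + 1 by omega), Nat.sub_eq_zero_of_le hj]

section Pairing

variable {m n : ℕ}

local notation "w" => binomialWeight m n (m + n - 1)

theorem binomialWeight_add_le_sub (hnm : n ≤ m) :
    ∀ i < n, w (m + i) ≤ w (m - 1 - i) := by
  intro i
  induction i with
  | zero =>
    intro hn
    have h := binomialWeight_succ_mul m n (m + n - 1) (m - 1)
    rw [show m - 1 + 1 = m by omega, show m + n - 1 - (m - 1) = n by omega, mul_comm n m] at h
    exact (Nat.eq_of_mul_eq_mul_right (Nat.mul_pos (by omega) hn) h).le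
  | succ i ih =>
    intro hi
    have hrecUp := binomialWeight_succ_mul m n (m + n - 1) (m + i)
    have hrecDown := binomialWeight_succ_mul m n (m + n - 1) (m - 2 - i)
    rw [show m + n - 1 - (m + i) = n - (i + 1) by omega] at hrecUp
    rw [show m - 2 - i + 1 = m - 1 - i by omega,
      show m + n - 1 - (m - 2 - i) = n + (i + 1) by omega] at hrecDown
    have hIH := ih (by omega)
    -- with `s = i + 1`, the step multiplies `w (m + i) / w (m - 1 - i)` by
    -- `m²(n² - s²) / (n²(m² - s²)) ≤ 1`
    have hfactor : m * m * ((n - (i + 1)) * (n + (i + 1))) ≤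
        n * n * ((m - 1 - i) * (m + (i + 1))) := by
      rw [show m - 1 - i = m - (i + 1) by omega]
      zify [show i + 1 ≤ n by omega, show i + 1 ≤ m by omega]
      have : (n : ℤ) * n ≤ m * m := by exact_mod_cast Nat.mul_self_le_mul_self hnm
      nlinarith [mul_le_mul_of_nonneg_right this (mul_self_nonneg ((i : ℤ) + 1))]
    rw [show m - 1 - (i + 1) = m - 2 - i by omega]
    refine Nat.le_of_mul_le_mul_right ?_ (Nat.mul_pos (Nat.mul_pos (by omega) (by omega))
      (Nat.mul_pos (by omega) (by omega)) : 0 < (m + i + 1) * n * ((n + (i + 1)) * m))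
    calc w (m + (i + 1)) * ((m + i + 1) * n * ((n + (i + 1)) * m))
        = w (m + i + 1) * ((m + i + 1) * n) * ((n + (i + 1)) * m) := by ring_nf
      _ = w (m + i) * (m * m * ((n - (i + 1)) * (n + (i + 1)))) := by rw [hrecUp]; ring
      _ ≤ w (m - 1 - i) * (n * n * ((m - 1 - i) * (m + (i + 1)))) := Nat.mul_le_mul hIH hfactor
      _ = w (m - 1 - i) * ((m - 1 - i) * n) * ((m + i + 1) * n) := by ring
      _ = w (m - 2 - i) * ((m + i + 1) * n * ((n + (i + 1)) * m)) := by rw [hrecDown]; ring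

theorem two_mul_sum_binomialWeight_Ico_lt (hn : 0 < n) (hnm : n < m) :
    2 * ∑ j ∈ Ico m (m + n), w j < (m + n) ^ (m + n - 1) := by
  have htotal : ∑ j ∈ range m, w j + ∑ j ∈ Ico m (m + n), w j = (m + n) ^ (m + n - 1) := by
    rw [sum_range_add_sum_Ico _ (by omega), ← sum_binomialWeight,
      show m + n - 1 + 1 = m + n by omega]
  have hupper : ∑ j ∈ Ico m (m + n), w j ≤ ∑ i ∈ range n, w (m - 1 - i) := by
    rw [sum_Ico_eq_sum_range, show m + n - m = n by omega]
    exact sum_le_sum fun i hi => binomialWeight_add_le_sub hnm.le i (mem_range.mp hi)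
  have hlower : ∑ i ∈ range n, w (m - 1 - i) < ∑ j ∈ range m, w j := by
    rw [← sum_range_reflect w m, ← sum_range_add_sum_Ico _ hnm.le, lt_add_iff_pos_right]
    exact sum_pos (fun i hi => binomialWeight_pos (by omega) hn (by omega))
      (nonempty_Ico.mpr hnm)
  omega

end Pairing

noncomputable def binomialTail (N k : ℕ) (x : ℝ) : ℝ :=
  ∑ j ∈ Ico k (N + 1), (N.choose j : ℝ) * x ^ j * (1 - x) ^ (N - j)

theorem hasDerivAt_choose_mul_pow_mul_one_sub_pow (N j : ℕ) (x : ℝ) :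
    HasDerivAt (fun y : ℝ => (N.choose j : ℝ) * y ^ j * (1 - y) ^ (N - j))
      (j * N.choose j * x ^ (j - 1) * (1 - x) ^ (N - j)
        - (j + 1) * N.choose (j + 1) * x ^ j * (1 - x) ^ (N - (j + 1))) x := by
  have h := ((hasDerivAt_pow j x).const_mul (N.choose j : ℝ)).mul
    ((hasDerivAt_pow (N - j) (1 - x)).comp x ((hasDerivAt_id x).const_sub 1))
  refine h.congr_deriv ?_
  rcases lt_or_ge j N with hj | hj
  · have hchoose : ((j + 1) * N.choose (j + 1) : ℝ) = N.choose j * (N - j : ℕ) := by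
      exact_mod_cast (mul_comm _ _).trans (Nat.choose_succ_right_eq N j)
    rw [hchoose, show N - (j + 1) = N - j - 1 by omega]
    simp only [Function.comp_apply]
    ring
  · simp [Nat.choose_eq_zero_of_lt (show N < j + 1 by omega), Nat.sub_eq_zero_of_le hj]
    ring

theorem hasDerivAt_binomialTail {N k : ℕ} (hk : k ≤ N + 1) (x : ℝ) :
    HasDerivAt (binomialTail N k) (k * N.choose k * x ^ (k - 1) * (1 - x) ^ (N - k)) x := by
  refine (HasDerivAt.fun_sum fun j (_ : j ∈ Ico k (N + 1)) =>
    hasDerivAt_choose_mul_pow_mul_one_sub_pow N j x).congr_deriv ?_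
  set u : ℕ → ℝ := fun j => j * N.choose j * x ^ (j - 1) * (1 - x) ^ (N - j)
  have hu : u (N + 1) = 0 := by simp [u]
  have htelescope : ∑ j ∈ Ico k (N + 1), (u j - u (j + 1)) = u k := by
    rw [← neg_inj, ← sum_neg_distrib]
    simpa [hu] using sum_Ico_sub u hk
  refine (sum_congr rfl fun j _ => ?_).trans htelescope
  simp [u]

theorem binomialTail_zero {N k : ℕ} (hk : 0 < k) : binomialTail N k 0 = 0 :=
  sum_eq_zero fun j hj => by simp [(mem_Ico.mp hj).1.trans_lt' hk |>.ne']

theorem binomialTail_one {N k : ℕ} (hk : k ≤ N) : binomialTail N k 1 = 1 := by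
  rw [binomialTail, sum_eq_single_of_mem N (mem_Ico.mpr ⟨hk, N.lt_succ_self⟩)]
  · simp
  · intro j hj hne
    simp [Nat.sub_ne_zero_of_lt (lt_of_le_of_ne (Nat.lt_succ_iff.mp (mem_Ico.mp hj).2) hne)]

theorem mul_integral_pow_mul_one_sub_pow {N k : ℕ} (hk : k ≤ N + 1) (a b : ℝ) :
    k * N.choose k * ∫ x in a..b, x ^ (k - 1) * (1 - x) ^ (N - k) =
      binomialTail N k b - binomialTail N k a := by
  rw [← intervalIntegral.integral_const_mul]
  refine intervalIntegral.integral_eq_sub_of_hasDerivAt (fun x _ => ?_)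
    (Continuous.intervalIntegrable (by fun_prop) a b)
  simpa only [mul_assoc] using hasDerivAt_binomialTail hk x

theorem integral_div_integral_eq_binomialTail {N k : ℕ} (hk : 0 < k) (hkN : k ≤ N) (x : ℝ) :
    (∫ t in 0..x, t ^ (k - 1) * (1 - t) ^ (N - k)) /
        (∫ t in 0..1, t ^ (k - 1) * (1 - t) ^ (N - k)) = binomialTail N k x := by
  have hK : (k * N.choose k : ℝ) ≠ 0 := by
    have := Nat.choose_pos hkN
    positivity
  rw [← mul_div_mul_left _ _ hK, mul_integral_pow_mul_one_sub_pow (by omega),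
    mul_integral_pow_mul_one_sub_pow (by omega), binomialTail_zero hk, binomialTail_one hkN]
  simp

theorem binomialTail_div_add {a b : ℕ} (hab : 0 < a + b) (N k : ℕ) :
    binomialTail N k (a / (a + b)) =
      (∑ j ∈ Ico k (N + 1), binomialWeight a b N j : ℕ) / ((a + b : ℕ) : ℝ) ^ N := by
  have hab' : (0 : ℝ) < a + b := by exact_mod_cast hab
  rw [binomialTail, eq_div_iff (by positivity), sum_mul]
  push_cast [binomialWeight]
  refine sum_congr rfl fun j hj => ?_
  have hjN : j ≤ N := Nat.lt_succ_iff.mp (mem_Ico.mp hj).2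
  rw [show 1 - (a : ℝ) / (a + b) = b / (a + b) by field_simp; ring, div_pow, div_pow,
    ← Nat.add_sub_cancel' hjN, pow_add, Nat.add_sub_cancel_left]
  field_simp

theorem binomialTail_lt_half {m n : ℕ} (hn : 0 < n) (hnm : n < m) :
    binomialTail (m + n - 1) m (m / (m + n)) < 1 / 2 := by
  have h := two_mul_sum_binomialWeight_Ico_lt hn hnm
  rw [binomialTail_div_add (by omega), show m + n - 1 + 1 = m + n by omega,
    div_lt_iff₀ (by positivity)]
  have h' : 2 * ∑ j ∈ Ico m (m + n), (binomialWeight m n (m + n - 1) j : ℝ) <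
      ((m + n) ^ (m + n - 1) : ℕ) := by exact_mod_cast h
  push_cast at h' ⊢
  linarith

open Set

theorem withDensity_betaPDFReal_eq (m n : ℕ) :
    volume.withDensity (fun z => ENNReal.ofReal (_root_.betaPDFReal m n z)) =
      (volume.restrict (Ioo 0 1)).withDensity
        fun z => ENNReal.ofReal (z ^ (m - 1) * (1 - z) ^ (n - 1) / beta m n) := by
  rw [← withDensity_indicator measurableSet_Ioo]
  congr 1
  ext z
  by_cases hz : z ∈ Ioo (0 : ℝ) 1 <;> simp [_root_.betaPDFReal, hz, beta]

theorem withDensity_betaPDFReal_Iio {m n : ℕ} (hm : 0 < m) (hn : 0 < n) {c : ℝ}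
    (hc₀ : 0 ≤ c) (hc₁ : c ≤ 1) :
    volume.withDensity (fun z => ENNReal.ofReal (_root_.betaPDFReal m n z)) (Iio c) =
      ENNReal.ofReal ((∫ z in 0..c, z ^ (m - 1) * (1 - z) ^ (n - 1)) / beta m n) := by
  rw [withDensity_betaPDFReal_eq, withDensity_apply _ measurableSet_Iio,
    Measure.restrict_restrict measurableSet_Iio, Iio_inter_Ioo, min_eq_left hc₁,
    intervalIntegral.integral_of_le hc₀, integral_Ioc_eq_integral_Ioo, ← integral_div,
    ofReal_integral_eq_lintegral_ofReal]
  · exact (Continuous.integrableOn_Icc (by fun_prop)).mono_set Ioo_subset_Icc_self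
  · filter_upwards [ae_restrict_mem measurableSet_Ioo] with z hz
    have h1z : 0 ≤ 1 - z := by linarith [hz.2]
    have hB := beta_pos (α := m) (β := n) (by positivity) (by positivity)
    exact div_nonneg (mul_nonneg (pow_nonneg hz.1.le _) (pow_nonneg h1z _)) hB.le

theorem withDensity_betaPDFReal_univ_eq_Iio_one (m n : ℕ) :
    volume.withDensity (fun z => ENNReal.ofReal (_root_.betaPDFReal m n z)) univ =
      volume.withDensity (fun z => ENNReal.ofReal (_root_.betaPDFReal m n z)) (Iio 1) := by
  rw [withDensity_betaPDFReal_eq, withDensity_apply _ MeasurableSet.univ,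
    withDensity_apply _ measurableSet_Iio, Measure.restrict_univ,
    Measure.restrict_restrict measurableSet_Iio, Iio_inter_Ioo, min_self]

/-- If Z has a Beta(m,n) distribution with positive integers m > n, then
P(Z < m/(m+n)) < 1/2, i.e. the mean of Z is strictly below its median. -/
theorem beta_mean_lt_median
    {Ω : Type*} [MeasurableSpace Ω] (P : Measure Ω) [IsProbabilityMeasure P]
    (m n : ℕ) (hn : 0 < n) (hmn : m > n)
    (Z : Ω → ℝ) (hZ : Measurable Z)
    (hdist : Measure.map Z P
      = volume.withDensity (fun z => ENNReal.ofReal (_root_.betaPDFReal m n z))) :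
    P {ω | Z ω < (m : ℝ) / (m + n)} < 1 / 2 := by
  have hm : 0 < m := hn.trans hmn
  have hlaw : ∀ c : ℝ, P {ω | Z ω < c} =
      volume.withDensity (fun z => ENNReal.ofReal (_root_.betaPDFReal m n z)) (Iio c) :=
    fun c => by rw [← hdist, Measure.map_apply hZ measurableSet_Iio]; rfl
  have hmass : (∫ z in 0..1, z ^ (m - 1) * (1 - z) ^ (n - 1)) / beta m n = 1 := by
    rw [← ENNReal.ofReal_eq_one, ← withDensity_betaPDFReal_Iio hm hn zero_le_one le_rfl,
      ← withDensity_betaPDFReal_univ_eq_Iio_one, ← hdist,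
      Measure.map_apply hZ MeasurableSet.univ]
    simp
  have hratio :=
    integral_div_integral_eq_binomialTail (N := m + n - 1) hm (by omega) (m / (m + n))
  rw [show m + n - 1 - m = n - 1 by omega] at hratio
  rw [hlaw, withDensity_betaPDFReal_Iio hm hn (by positivity)
      (div_le_one_of_le₀ (by simp) (by positivity)),
    ← eq_of_div_eq_one hmass, hratio]
  calc _ < ENNReal.ofReal (1 / 2) :=
        (ENNReal.ofReal_lt_ofReal_iff (by norm_num)).mpr (binomialTail_lt_half hn hmn)
    _ = 1 / 2 := by simp
end

section
/- For positive integers m and n, the regularized incomplete beta function I(m/(m+n), m, n) is strictly decreasing in m for fixed n. -/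
/-!
Substituting `t = v / (v + n)` turns `I(m/(m+n), m, n)` into `n ^ n Γ(m+n) / (Γ(m) Γ(n)) · J m`
with `J m = ∫₀^m v^(m-1) / (v+n)^(m+n) dv`, so the claim reduces to `(m+n) J (m+1) < m J m`.
Integrating the derivative of `v^m / (v+n)^(m+n)` over `[0, m]` gives
`m J m = m^m / (m+n)^(m+n) + (m+n) ∫₀^m ψ` with `ψ v = v^m / (v+n)^(m+n+1)`, while
`J (m+1) = ∫₀^m ψ + ∫ₘ^(m+1) ψ`. Since `ψ` is strictly decreasing on `[m, ∞)`,
`(m+n) ∫ₘ^(m+1) ψ < (m+n) ψ m = m^m / (m+n)^(m+n)`.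
-/

open MeasureTheory

/-- The regularized incomplete beta function
`I(x, α, β) = (1/B(α,β)) ∫₀^x t^(α-1) (1-t)^(β-1) dt`,
where `B(α,β) = Γ(α)Γ(β)/Γ(α+β)`. -/
noncomputable def regIncBeta (x α β : ℝ) : ℝ :=
  (∫ t in (0:ℝ)..x, t ^ (α - 1) * (1 - t) ^ (β - 1)) /
    (Real.Gamma α * Real.Gamma β / Real.Gamma (α + β))

open Set

lemma intervalIntegrable_pow_div_add_pow (p k : ℕ) {c x y : ℝ} (hc : 0 < c) (hx : 0 ≤ x)
    (hy : 0 ≤ y) : IntervalIntegrable (fun v : ℝ => v ^ p / (v + c) ^ k) volume x y := by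
  refine ContinuousOn.intervalIntegrable (ContinuousOn.div (by fun_prop) (by fun_prop) ?_)
  intro v hv
  have : 0 ≤ v := (le_min hx hy).trans hv.1
  positivity

/-- The substitution `t = v / (v + c)`. -/
lemma integral_pow_mul_one_sub_pow_eq (p q : ℕ) {c x : ℝ} (hc : 0 < c) (hx : 0 ≤ x) :
    ∫ t in (0:ℝ)..x / (x + c), t ^ p * (1 - t) ^ q
      = c ^ (q + 1) * ∫ v in (0:ℝ)..x, v ^ p / (v + c) ^ (p + q + 2) := by
  have hpos : ∀ v ∈ uIcc 0 x, 0 < v + c := fun v hv => by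
    rw [uIcc_of_le hx] at hv; linarith [hv.1]
  have hsubst := intervalIntegral.integral_comp_mul_deriv (a := 0) (b := x)
    (f := fun v => v / (v + c)) (f' := fun v => c / (v + c) ^ 2)
    (g := fun t => t ^ p * (1 - t) ^ q)
    (fun v hv => ((hasDerivAt_id v).div ((hasDerivAt_id v).add_const c)
      (hpos v hv).ne').congr_deriv (by simp only [id]; ring))
    (ContinuousOn.div continuousOn_const (by fun_prop) fun v hv => (pow_pos (hpos v hv) 2).ne')
    (by fun_prop)
  simp only [zero_add, zero_div] at hsubst
  rw [← hsubst, ← intervalIntegral.integral_const_mul]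
  refine intervalIntegral.integral_congr fun v hv => ?_
  have hv' := (hpos v hv).ne'
  simp only [Function.comp]
  rw [show 1 - v / (v + c) = c / (v + c) by field_simp; ring, div_pow, div_pow]
  field_simp
  ring

lemma hasDerivAt_pow_succ_div_add_pow (p k : ℕ) {c v : ℝ} (hv : v + c ≠ 0) :
    HasDerivAt (fun v : ℝ => v ^ (p + 1) / (v + c) ^ k)
      ((p + 1) * (v ^ p / (v + c) ^ k) - k * (v ^ (p + 1) / (v + c) ^ (k + 1))) v := by
  have hnum := hasDerivAt_pow (p + 1) v
  have hden := ((hasDerivAt_id v).add_const c).fun_pow k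
  refine (hnum.div hden (pow_ne_zero _ hv)).congr_deriv ?_
  simp only [id, Nat.cast_add, Nat.cast_one, add_tsub_cancel_right]
  rcases k with _ | k
  · simp
  · simp only [Nat.cast_add, Nat.cast_one, add_tsub_cancel_right]
    field_simp
    ring

lemma integral_pow_div_add_pow_recurrence (p k : ℕ) {c x : ℝ} (hc : 0 < c) (hx : 0 ≤ x) :
    (p + 1) * ∫ v in (0:ℝ)..x, v ^ p / (v + c) ^ k
      = x ^ (p + 1) / (x + c) ^ k + k * ∫ v in (0:ℝ)..x, v ^ (p + 1) / (v + c) ^ (k + 1) := by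
  have hint₁ := (intervalIntegrable_pow_div_add_pow p k hc le_rfl hx).const_mul (p + 1)
  have hint₂ := (intervalIntegrable_pow_div_add_pow (p + 1) (k + 1) hc le_rfl hx).const_mul k
  have hftc := intervalIntegral.integral_eq_sub_of_hasDerivAt
    (fun v hv => hasDerivAt_pow_succ_div_add_pow p k (c := c) (v := v) (by
      rw [uIcc_of_le hx] at hv; linarith [hv.1])) (hint₁.sub hint₂)
  rw [intervalIntegral.integral_sub hint₁ hint₂, intervalIntegral.integral_const_mul,
    intervalIntegral.integral_const_mul] at hftc
  simp only [ne_eq, add_eq_zero, one_ne_zero, and_false, not_false_eq_true, zero_pow,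
    zero_div, sub_zero] at hftc
  linarith

lemma strictAntiOn_pow_succ_div_add_pow {p k : ℕ} {c x₀ : ℝ} (hc : 0 < c) (hk : p + 1 < k)
    (hx₀ : (p + 1) * (x₀ + c) ≤ k * x₀) :
    StrictAntiOn (fun v : ℝ => v ^ (p + 1) / (v + c) ^ k) (Ici x₀) := by
  have hk' : (p : ℝ) + 1 < k := by exact_mod_cast hk
  have hx₀pos : 0 < x₀ := by nlinarith
  have hpos : ∀ v, x₀ ≤ v → 0 < v + c := fun v hv => by linarith
  refine strictAntiOn_of_hasDerivWithinAt_neg (convex_Ici x₀)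
    (ContinuousOn.div (by fun_prop) (by fun_prop) fun v hv => (pow_pos (hpos v hv) k).ne')
    (fun v hv => (hasDerivAt_pow_succ_div_add_pow p k (c := c)
      (hpos v (interior_subset hv)).ne').hasDerivWithinAt) fun v hv => ?_
  rw [interior_Ici] at hv
  have hv : x₀ < v := hv
  have hvc := hpos v hv.le
  have hlin : (p + 1) * (v + c) < k * v := by nlinarith
  have hv₀ : 0 < v := hx₀pos.trans hv
  rw [sub_neg]
  calc (p + 1) * (v ^ p / (v + c) ^ k) < k * v / (v + c) * (v ^ p / (v + c) ^ k) :=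
        mul_lt_mul_of_pos_right ((lt_div_iff₀ hvc).2 hlin) (by positivity)
    _ = k * (v ^ (p + 1) / (v + c) ^ (k + 1)) := by field_simp; ring

lemma integral_lt_mul_of_strictAntiOn {f : ℝ → ℝ} {a b : ℝ} (hab : a < b)
    (hcont : ContinuousOn f (Icc a b)) (hanti : StrictAntiOn f (Icc a b)) :
    ∫ x in a..b, f x < (b - a) * f a := by
  have ha : a ∈ Icc a b := left_mem_Icc.2 hab.le
  have hb : b ∈ Icc a b := right_mem_Icc.2 hab.le
  calc ∫ x in a..b, f x < ∫ _ in a..b, f a :=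
        intervalIntegral.integral_lt_integral_of_continuousOn_of_le_of_exists_lt hab hcont
          continuousOn_const (fun x hx => (hanti ha (Ioc_subset_Icc_self hx) hx.1).le)
          ⟨b, hb, hanti ha hb hab⟩
    _ = (b - a) * f a := by rw [intervalIntegral.integral_const, smul_eq_mul]

lemma Real.Gamma_add_one_mul_Gamma_div_Gamma {α β : ℝ} (hα : α ≠ 0) (hαβ : α + β ≠ 0) :
    Real.Gamma (α + 1) * Real.Gamma β / Real.Gamma (α + 1 + β)
      = α / (α + β) * (Real.Gamma α * Real.Gamma β / Real.Gamma (α + β)) := by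
  rw [add_right_comm, Real.Gamma_add_one hα, Real.Gamma_add_one hαβ, div_mul_div_comm,
    mul_assoc α]

/-- Under `t = v / (v + n)`, the integral defining `I(m/(m+n), m, n)` becomes
`n ^ n * meanIncBetaIntegral (m - 1) (n - 1)`. -/
noncomputable def meanIncBetaIntegral (a b : ℕ) : ℝ :=
  ∫ v in (0:ℝ)..a + 1, v ^ a / (v + (b + 1)) ^ (a + b + 2)

lemma regIncBeta_mean_eq (a b : ℕ) :
    regIncBeta ((a + 1) / ((a + 1) + (b + 1))) (a + 1) (b + 1)
      = (b + 1) ^ (b + 1) * meanIncBetaIntegral a b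
        / (Real.Gamma (a + 1) * Real.Gamma (b + 1) / Real.Gamma ((a + 1) + (b + 1))) := by
  have hexp : ∀ k : ℕ, ((k : ℝ) + 1) - 1 = (k : ℕ) := fun k => add_sub_cancel_right _ _
  simp only [regIncBeta, hexp, Real.rpow_natCast]
  rw [integral_pow_mul_one_sub_pow_eq a b (by positivity) (by positivity), meanIncBetaIntegral]

lemma meanIncBetaIntegral_succ_lt (a b : ℕ) :
    (a + b + 2) * meanIncBetaIntegral (a + 1) b < (a + 1) * meanIncBetaIntegral a b := by
  set ψ : ℝ → ℝ := fun v => v ^ (a + 1) / (v + (b + 1)) ^ (a + b + 3)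
  have hc : (0 : ℝ) < b + 1 := by positivity
  have hsplit : meanIncBetaIntegral (a + 1) b
      = (∫ v in (0:ℝ)..a + 1, ψ v) + ∫ v in (a + 1 : ℝ)..a + 1 + 1, ψ v := by
    rw [intervalIntegral.integral_add_adjacent_intervals
      (intervalIntegrable_pow_div_add_pow _ _ hc le_rfl (by positivity))
      (intervalIntegrable_pow_div_add_pow _ _ hc (by positivity) (by positivity)),
      meanIncBetaIntegral]
    push_cast
    rw [show a + 1 + b + 2 = a + b + 3 by ring]
  have hparts : (a + 1) * meanIncBetaIntegral a b
      = (a + 1) ^ (a + 1) / (a + 1 + (b + 1)) ^ (a + b + 2)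
        + (a + b + 2) * ∫ v in (0:ℝ)..a + 1, ψ v := by
    have := integral_pow_div_add_pow_recurrence a (a + b + 2) hc (x := a + 1) (by positivity)
    push_cast at this
    exact this
  have htail : ∫ v in (a + 1 : ℝ)..a + 1 + 1, ψ v < ψ (a + 1) := by
    have hanti := strictAntiOn_pow_succ_div_add_pow (p := a) (k := a + b + 3) (x₀ := a + 1) hc
      (by omega) (by push_cast; nlinarith)
    simpa using integral_lt_mul_of_strictAntiOn (lt_add_one _)
      (ContinuousOn.div (by fun_prop) (by fun_prop) fun v hv => by
        have : (0 : ℝ) ≤ v := le_trans (by positivity) hv.1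
        positivity)
      (hanti.mono Icc_subset_Ici_self)
  have hψ : (a + b + 2 : ℝ) * ψ (a + 1)
      = (a + 1) ^ (a + 1) / (a + 1 + (b + 1)) ^ (a + b + 2) := by
    simp only [ψ]
    rw [show a + b + 3 = a + b + 2 + 1 by ring, pow_succ]
    field_simp
    ring
  have := mul_lt_mul_of_pos_left htail (by positivity : (0 : ℝ) < a + b + 2)
  rw [hparts, hsplit, mul_add]
  linarith

lemma regIncBeta_mean_succ_lt {m n : ℕ} (hm : 0 < m) (hn : 0 < n) :
    regIncBeta (((m + 1 : ℕ) : ℝ) / ((m + 1 : ℕ) + n)) (m + 1 : ℕ) n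
      < regIncBeta ((m : ℝ) / (m + n)) m n := by
  obtain ⟨a, rfl⟩ := Nat.exists_eq_add_one_of_ne_zero hm.ne'
  obtain ⟨b, rfl⟩ := Nat.exists_eq_add_one_of_ne_zero hn.ne'
  have hsucc := regIncBeta_mean_eq (a + 1) b
  push_cast at hsucc ⊢
  rw [hsucc, regIncBeta_mean_eq,
    Real.Gamma_add_one_mul_Gamma_div_Gamma (by positivity) (by positivity)]
  set B := Real.Gamma (a + 1) * Real.Gamma (b + 1) / Real.Gamma ((a + 1) + (b + 1))
  have hB : 0 < B := by unfold B; positivity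
  have hC : (0 : ℝ) < (b + 1) ^ (b + 1) := by positivity
  calc (b + 1) ^ (b + 1) * meanIncBetaIntegral (a + 1) b / ((a + 1) / (a + 1 + (b + 1)) * B)
      = (b + 1) ^ (b + 1) * ((a + b + 2) * meanIncBetaIntegral (a + 1) b) / ((a + 1) * B) := by
        field_simp
        ring
    _ < (b + 1) ^ (b + 1) * ((a + 1) * meanIncBetaIntegral a b) / ((a + 1) * B) := by
        gcongr _ * ?_ / _
        exact meanIncBetaIntegral_succ_lt a b
    _ = (b + 1) ^ (b + 1) * meanIncBetaIntegral a b / B := by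
        field_simp

/-- For positive integers m and n, `I(m/(m+n), m, n)` is strictly decreasing in m
for fixed n. -/
theorem regIncBeta_strict_anti_in_m
    (n : ℕ) (hn : 0 < n) (m₁ m₂ : ℕ) (hm₁ : 0 < m₁) (h : m₁ < m₂) :
    regIncBeta ((m₂ : ℝ) / (m₂ + n)) m₂ n < regIncBeta ((m₁ : ℝ) / (m₁ + n)) m₁ n :=
  Nat.rel_of_forall_rel_succ_of_le_of_lt (· > ·)
    (f := fun m : ℕ => regIncBeta ((m : ℝ) / (m + n)) m n)
    (fun _ hm => regIncBeta_mean_succ_lt hm hn) hm₁ h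
end

section
/- For positive integers m and n, the regularized incomplete beta function I(m/(m+n), m, n) is strictly increasing in n for fixed m. -/
/-!
Write `m = M + 1`, `n = K + 1`, `u = m / (m + n + 1)`, `v = m / (m + n)` and
`g t = t ^ M (1 - t) ^ K`. Integrating `d/dt [t ^ m (1 - t) ^ n]` gives
`I(x, m, n + 1) = I(x, m, n) + x ^ m (1 - x) ^ n / (n B(m, n))`, so the step from `n` to `n + 1`
amounts to `∫_u^v g < u ^ m (1 - u) ^ n / n`. On `[u, v]` the integrand `g` is dominated by
`g · (1 + c (t - u) (v - t))`, which has an explicit antiderivative; comparing its values at `u`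
and `v` reduces the claim to `(1 + 1 / n) ^ (n + 1) > (1 + 1 / (m + n)) ^ (m + n + 1)`, i.e. to
the decrease of `(1 + 1 / j) ^ (j + 1)`.
-/

open MeasureTheory

theorem one_add_one_div_pow_strictAnti :
    StrictAnti fun n : ℕ => (1 + 1 / (n + 1 : ℝ)) ^ (n + 2) := by
  refine strictAnti_nat_of_succ_lt fun n => ?_
  set y : ℝ := n + 1 with hy
  have hy0 : 0 < y := by positivity
  set a : ℝ := 1 + 1 / y with ha
  set b : ℝ := 1 + 1 / (y + 1) with hb
  have hb0 : 0 < b := by positivity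
  have ratio : a / b = 1 + 1 / (y * (y + 2)) := by rw [ha, hb]; field_simp; ring
  have bernoulli : 1 + (n + 2 : ℕ) * (1 / (y * (y + 2))) ≤ (a / b) ^ (n + 2) :=
    ratio ▸ one_add_mul_le_pow (by linarith [show 0 < 1 / (y * (y + 2)) by positivity]) _
  have ratio_gt : b < (a / b) ^ (n + 2) := by
    refine lt_of_lt_of_le ?_ bernoulli
    rw [hb]; push_cast; rw [show (n : ℝ) + 2 = y + 1 by rw [hy]; ring]
    field_simp; nlinarith
  calc (1 + 1 / ((n + 1 : ℕ) + 1 : ℝ)) ^ (n + 1 + 2) = b * b ^ (n + 2) := by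
        rw [hb, hy]; push_cast; ring
    _ < (a / b) ^ (n + 2) * b ^ (n + 2) := by gcongr
    _ = a ^ (n + 2) := by rw [← mul_pow, div_mul_cancel₀ _ hb0.ne']

section

variable (M K : ℕ)

open scoped Nat

theorem hasDerivAt_pow_mul_one_sub_pow (t : ℝ) :
    HasDerivAt (fun t : ℝ => t ^ (M + 1) * (1 - t) ^ (K + 1))
      (t ^ M * (1 - t) ^ K * ((M + 1) - (M + K + 2) * t)) t := by
  have hsub : HasDerivAt (fun t : ℝ => 1 - t) (-1) t := by
    simpa using (hasDerivAt_id t).const_sub 1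
  refine ((hasDerivAt_pow (M + 1) t).fun_mul (hsub.fun_pow (K + 1))).congr_deriv ?_
  push_cast
  ring

theorem integral_pow_mul_one_sub_pow_succ (x : ℝ) :
    (M + K + 2 : ℝ) * ∫ t in 0..x, t ^ M * (1 - t) ^ (K + 1) =
      (K + 1) * (∫ t in 0..x, t ^ M * (1 - t) ^ K) + x ^ (M + 1) * (1 - x) ^ (K + 1) := by
  have split : ∀ t : ℝ, t ^ M * (1 - t) ^ K * ((M + 1) - (M + K + 2) * t) =
      (M + K + 2) * (t ^ M * (1 - t) ^ (K + 1)) - (K + 1) * (t ^ M * (1 - t) ^ K) :=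
    fun t => by ring
  have ftc := intervalIntegral.integral_eq_sub_of_hasDerivAt
    (fun t _ => hasDerivAt_pow_mul_one_sub_pow M K t)
    ((by fun_prop : Continuous _).intervalIntegrable 0 x)
  simp only [split] at ftc
  rw [intervalIntegral.integral_sub ((by fun_prop : Continuous _).intervalIntegrable _ _)
      ((by fun_prop : Continuous _).intervalIntegrable _ _),
    intervalIntegral.integral_const_mul, intervalIntegral.integral_const_mul] at ftc
  simp only [ne_eq, Nat.add_eq_zero_iff, one_ne_zero, and_false, not_false_eq_true, zero_pow,
    sub_zero, one_pow, mul_one] at ftc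
  linarith

-- The coefficients are fixed by asking the derivative to exceed `t ^ M * (1 - t) ^ K` by a
-- multiple of `(t - u) (v - t)`, where `u = (M + 1) / (M + K + 3)` and `v = (M + 1) / (M + K + 2)`.
noncomputable def betaMajorantPrimitive (t : ℝ) : ℝ :=
  t ^ (M + 1) * (1 - t) ^ (K + 1) *
    ((M + K + 3) / (M + 1) - (M + K + 2) ^ 2 / ((M + 1) * (K + 1)) * (1 - t))

theorem hasDerivAt_betaMajorantPrimitive (t : ℝ) :
    HasDerivAt (betaMajorantPrimitive M K) (t ^ M * (1 - t) ^ K *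
      (1 + (M + K + 2) * ((M + K + 3) * t - (M + 1)) * ((M + 1) - (M + K + 2) * t) /
        ((M + 1) * (K + 1)))) t := by
  have hlin : HasDerivAt
      (fun t : ℝ => (M + K + 3) / (M + 1) - (M + K + 2) ^ 2 / ((M + 1) * (K + 1)) * (1 - t))
      ((M + K + 2 : ℝ) ^ 2 / ((M + 1) * (K + 1))) t := by
    simpa using (((hasDerivAt_id t).const_sub 1).const_mul
      ((M + K + 2) ^ 2 / ((M + 1) * (K + 1) : ℝ))).const_sub ((M + K + 3) / (M + 1) : ℝ)
  refine ((hasDerivAt_pow_mul_one_sub_pow M K t).fun_mul hlin).congr_deriv ?_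
  field_simp
  ring

theorem betaMajorantPrimitive_sub_lt :
    betaMajorantPrimitive M K ((M + 1) / (M + K + 2)) -
        betaMajorantPrimitive M K ((M + 1) / (M + K + 3)) <
      ((M + 1) / (M + K + 3)) ^ (M + 1) * (1 - (M + 1) / (M + K + 3)) ^ (K + 1) / (K + 1) := by
  have power_lt : ((K : ℝ) + 1) ^ (K + 2) * (M + K + 3) ^ (M + K + 3) <
      (K + 2) ^ (K + 2) * (M + K + 2) ^ (M + K + 3) := by
    have := one_add_one_div_pow_strictAnti (show K < M + K + 1 by omega)
    simp only at this
    push_cast at this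
    rw [show (1 : ℝ) + 1 / (K + 1) = (K + 2) / (K + 1) by field_simp; ring,
      show (1 : ℝ) + 1 / (M + K + 1 + 1) = (M + K + 3) / (M + K + 2) by field_simp; ring,
      div_pow, div_pow, div_lt_div_iff₀ (by positivity) (by positivity),
      show M + K + 1 + 2 = M + K + 3 by ring] at this
    linarith
  have at_v : betaMajorantPrimitive M K ((M + 1) / (M + K + 2)) =
      (M + 1) ^ (M + 1) * (K + 1) ^ (K + 1) / ((M + 1) * (M + K + 2) ^ (M + K + 2)) := by
    unfold betaMajorantPrimitive
    rw [show (1 : ℝ) - (M + 1) / (M + K + 2) = (K + 1) / (M + K + 2) by field_simp; ring,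
      div_pow, div_pow]
    field_simp
    ring
  have at_u : betaMajorantPrimitive M K ((M + 1) / (M + K + 3)) +
        ((M + 1) / (M + K + 3)) ^ (M + 1) * (1 - (M + 1) / (M + K + 3)) ^ (K + 1) / (K + 1) =
      (M + 1) ^ (M + 1) * (K + 2) ^ (K + 2) * (M + K + 2) /
        ((M + 1) * (K + 1) * (M + K + 3) ^ (M + K + 3)) := by
    unfold betaMajorantPrimitive
    rw [show (1 : ℝ) - (M + 1) / (M + K + 3) = (K + 2) / (M + K + 3) by field_simp; ring,
      div_pow, div_pow]
    field_simp
    ring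
  rw [sub_lt_iff_lt_add', at_v, at_u, div_lt_div_iff₀ (by positivity) (by positivity)]
  calc _ = ((M : ℝ) + 1) ^ (M + 2) * ((K + 1) ^ (K + 2) * (M + K + 3) ^ (M + K + 3)) := by ring
    _ < (M + 1) ^ (M + 2) * ((K + 2) ^ (K + 2) * (M + K + 2) ^ (M + K + 3)) := by gcongr
    _ = _ := by ring

theorem integral_pow_mul_one_sub_pow_lt :
    ∫ t in (M + 1) / (M + K + 3)..(M + 1) / (M + K + 2), t ^ M * (1 - t) ^ K <
      ((M + 1) / (M + K + 3)) ^ (M + 1) * (1 - (M + 1) / (M + K + 3)) ^ (K + 1) / (K + 1) := by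
  set u : ℝ := (M + 1) / (M + K + 3) with hu
  set v : ℝ := (M + 1) / (M + K + 2) with hv
  have huv : u ≤ v := div_le_div_of_nonneg_left (by positivity) (by positivity) (by linarith)
  have hv1 : v ≤ 1 := by rw [hv, div_le_one (by positivity)]; linarith
  have majorant : ∀ t ∈ Set.Icc u v, t ^ M * (1 - t) ^ K ≤ t ^ M * (1 - t) ^ K *
      (1 + (M + K + 2) * ((M + K + 3) * t - (M + 1)) * ((M + 1) - (M + K + 2) * t) /
        ((M + 1) * (K + 1))) := by
    rintro t ⟨htu, htv⟩
    have hu0 : 0 ≤ u := by positivity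
    have left : 0 ≤ (M + K + 3) * t - (M + 1) := by
      rw [hu, div_le_iff₀ (by positivity)] at htu; linarith
    have right : 0 ≤ (M + 1) - (M + K + 2) * t := by
      rw [hv, le_div_iff₀ (by positivity)] at htv; linarith
    have hg : 0 ≤ t ^ M * (1 - t) ^ K := by
      have := hu0.trans htu
      have := htv.trans hv1
      positivity
    exact le_mul_of_one_le_right hg (le_add_of_nonneg_right (by positivity))
  calc (∫ t in u..v, t ^ M * (1 - t) ^ K)
      ≤ ∫ t in u..v, t ^ M * (1 - t) ^ K *
          (1 + (M + K + 2) * ((M + K + 3) * t - (M + 1)) * ((M + 1) - (M + K + 2) * t) /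
            ((M + 1) * (K + 1))) :=
        intervalIntegral.integral_mono_on huv ((by fun_prop : Continuous _).intervalIntegrable _ _)
          ((by fun_prop : Continuous _).intervalIntegrable _ _) majorant
    _ = betaMajorantPrimitive M K v - betaMajorantPrimitive M K u :=
        intervalIntegral.integral_eq_sub_of_hasDerivAt
          (fun t _ => hasDerivAt_betaMajorantPrimitive M K t)
          ((by fun_prop : Continuous _).intervalIntegrable _ _)
    _ < _ := betaMajorantPrimitive_sub_lt M K

theorem regIncBeta_natCast_add_one (x : ℝ) :
    regIncBeta x (M + 1) (K + 1) =
      (M + K + 1)! / (M ! * K !) * ∫ t in 0..x, t ^ M * (1 - t) ^ K := by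
  have hΓ : Real.Gamma ((M + 1 : ℝ) + (K + 1)) = (M + K + 1)! := by
    rw [show (M + 1 : ℝ) + (K + 1) = (M + K + 1 : ℕ) + 1 by push_cast; ring,
      Real.Gamma_nat_eq_factorial]
  simp only [regIncBeta, add_sub_cancel_right, Real.rpow_natCast, hΓ, Real.Gamma_nat_eq_factorial]
  field_simp

theorem regIncBeta_add_two (x : ℝ) :
    regIncBeta x (M + 1) (K + 2) = regIncBeta x (M + 1) (K + 1) +
      (M + K + 1)! / (M ! * K !) * (x ^ (M + 1) * (1 - x) ^ (K + 1) / (K + 1)) := by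
  have h := regIncBeta_natCast_add_one M (K + 1) x
  push_cast at h
  rw [show (K : ℝ) + 2 = K + 1 + 1 by ring, h, regIncBeta_natCast_add_one,
    show M + (K + 1) + 1 = (M + K + 1) + 1 by ring, Nat.factorial_succ (M + K + 1),
    Nat.factorial_succ K]
  push_cast
  field_simp
  linear_combination integral_pow_mul_one_sub_pow_succ M K x

theorem regIncBeta_lt_regIncBeta_add_two :
    regIncBeta ((M + 1) / (M + K + 2)) (M + 1) (K + 1) <
      regIncBeta ((M + 1) / (M + K + 3)) (M + 1) (K + 2) := by
  have hc : (0 : ℝ) < (M + K + 1)! / (M ! * K !) := by positivity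
  rw [regIncBeta_add_two, regIncBeta_natCast_add_one, regIncBeta_natCast_add_one,
    ← intervalIntegral.integral_add_adjacent_intervals (b := (M + 1) / (M + K + 3))
      ((by fun_prop : Continuous _).intervalIntegrable _ _)
      ((by fun_prop : Continuous _).intervalIntegrable _ _), mul_add]
  exact add_lt_add_of_le_of_lt le_rfl
    (mul_lt_mul_of_pos_left (integral_pow_mul_one_sub_pow_lt M K) hc)

end

/-- For positive integers m and n, `I(m/(m+n), m, n)` is strictly increasing in n
for fixed m. -/
theorem regIncBeta_strict_mono_in_n
    (m : ℕ) (hm : 0 < m) (n₁ n₂ : ℕ) (hn₁ : 0 < n₁) (h : n₁ < n₂) :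
    regIncBeta ((m : ℝ) / (m + n₁)) m n₁ < regIncBeta ((m : ℝ) / (m + n₂)) m n₂ := by
  obtain ⟨M, rfl⟩ := Nat.exists_eq_add_one_of_ne_zero hm.ne'
  refine Nat.rel_of_forall_rel_succ_of_le_of_lt (· < ·)
    (f := fun n : ℕ => regIncBeta (((M + 1 : ℕ) : ℝ) / ((M + 1 : ℕ) + n)) (M + 1 : ℕ) n)
    (fun n hn => ?_) hn₁ h
  obtain ⟨K, rfl⟩ := Nat.exists_eq_add_one_of_ne_zero (by omega : n ≠ 0)
  convert regIncBeta_lt_regIncBeta_add_two M K using 2 <;> push_cast <;> ring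
end

section
/- Let S_m be a Poisson random variable with mean m, where m is a positive integer. Then P(S_m ≥ m) is strictly decreasing in m. -/
/-!
Write `F_m(x) = P(S_x < m) = ∑_{k<m} e^{-x} x^k / k!`; the claim is that `F_m(m)` strictly
increases with `m`. The derivative `F_{m+1}' = -e^{-x} x^m / m!` telescopes, and
`x ↦ e^{-x} x^m` peaks at `x = m`. So by the mean value theorem `F_{m+1}` loses less than
`e^{-m} m^m / m!` between `m` and `m + 1`, which is exactly what it gains over `F_m` at `m`.
-/

open Finset Real
open scoped Nat

noncomputable def poissonTerm (x : ℝ) (k : ℕ) : ℝ := exp (-x) * x ^ k / k !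

noncomputable def poissonProbLt (x : ℝ) (m : ℕ) : ℝ := ∑ k ∈ range m, poissonTerm x k

lemma hasSum_poissonTerm (x : ℝ) : HasSum (poissonTerm x) 1 := by
  have h := (NormedSpace.expSeries_div_hasSum_exp x).mul_left (exp (-x))
  rw [← exp_eq_exp_ℝ, ← exp_add, neg_add_cancel, exp_zero] at h
  show HasSum (fun k => exp (-x) * x ^ k / k !) 1
  simpa only [mul_div_assoc] using h

lemma tsum_ite_le_poissonTerm (x : ℝ) (m : ℕ) :
    ∑' k, (if m ≤ k then poissonTerm x k else 0) = 1 - poissonProbLt x m := by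
  have hhead : HasSum (fun k => if k < m then poissonTerm x k else 0) (poissonProbLt x m) := by
    have h := hasSum_sum_of_ne_finset_zero (f := fun k => if k < m then poissonTerm x k else 0)
      (s := range m) (L := .unconditional ℕ) fun k hk => if_neg (by simpa using hk)
    rwa [sum_congr rfl fun k hk => if_pos (mem_range.1 hk)] at h
  rw [← ((hasSum_poissonTerm x).sub hhead).tsum_eq]
  congr 1 with k
  split_ifs <;> first | omega | simp

lemma poissonProbLt_succ (x : ℝ) (m : ℕ) :
    poissonProbLt x (m + 1) = poissonProbLt x m + poissonTerm x m :=
  sum_range_succ _ _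

lemma hasDerivAt_poissonTerm_succ (x : ℝ) (n : ℕ) :
    HasDerivAt (poissonTerm · (n + 1)) (poissonTerm x n - poissonTerm x (n + 1)) x := by
  have hexp : HasDerivAt (fun y => exp (-y)) (-exp (-x)) x := by
    simpa using (hasDerivAt_neg x).exp
  refine ((hexp.mul (hasDerivAt_pow (n + 1) x)).div_const ((n + 1)! : ℝ)).congr_deriv ?_
  rw [poissonTerm, poissonTerm, Nat.factorial_succ, Nat.cast_mul]
  field_simp
  push_cast
  ring

lemma hasDerivAt_poissonProbLt_succ (x : ℝ) (n : ℕ) :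
    HasDerivAt (poissonProbLt · (n + 1)) (-poissonTerm x n) x := by
  induction n with
  | zero => simpa [poissonProbLt, poissonTerm] using (hasDerivAt_neg x).exp
  | succ n ih =>
    simp only [poissonProbLt_succ _ (n + 1)]
    exact (ih.add (hasDerivAt_poissonTerm_succ x n)).congr_deriv (by ring)

lemma poissonTerm_lt_poissonTerm_self {m : ℕ} {c : ℝ} (hc : (m : ℝ) < c) :
    poissonTerm c m < poissonTerm m m := by
  rcases m.eq_zero_or_pos with rfl | hm
  · simpa [poissonTerm] using hc
  have hm0 : (0 : ℝ) < m := Nat.cast_pos.2 hm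
  have hpow : c ^ m < m ^ m * exp (c - m) :=
    calc c ^ m = (m * ((c - m) / m + 1)) ^ m := by field_simp; ring
      _ < (m * exp ((c - m) / m)) ^ m := by
        gcongr
        exact add_one_lt_exp (div_ne_zero (sub_ne_zero.2 hc.ne') hm0.ne')
      _ = m ^ m * exp (c - m) := by rw [mul_pow, ← exp_nat_mul, mul_div_cancel₀ _ hm0.ne']
  unfold poissonTerm
  gcongr ?_ / _
  calc exp (-c) * c ^ m < exp (-c) * (m ^ m * exp (c - m)) := by gcongr
    _ = exp (-m) * m ^ m := by rw [mul_left_comm, ← exp_add]; ring_nf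

lemma poissonProbLt_self_lt_succ (m : ℕ) :
    poissonProbLt m m < poissonProbLt (m + 1 : ℕ) (m + 1) := by
  have hderiv (x : ℝ) := hasDerivAt_poissonProbLt_succ x m
  obtain ⟨c, hc, hslope⟩ := exists_hasDerivAt_eq_slope (poissonProbLt · (m + 1))
    (-poissonTerm · m) (lt_add_one (m : ℝ))
    (fun x _ => (hderiv x).continuousAt.continuousWithinAt) (fun x _ => hderiv x)
  rw [add_sub_cancel_left, div_one] at hslope
  have hdecay := poissonTerm_lt_poissonTerm_self hc.1
  rw [Nat.cast_succ]
  linarith [poissonProbLt_succ (m : ℝ) m]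

theorem poisson_tail_strict_anti_general
    (m₁ m₂ : ℕ) (h : m₁ < m₂) :
    (∑' k : ℕ, if m₂ ≤ k then Real.exp (-(m₂ : ℝ)) * (m₂ : ℝ) ^ k / k.factorial else 0)
      < ∑' k : ℕ, if m₁ ≤ k then Real.exp (-(m₁ : ℝ)) * (m₁ : ℝ) ^ k / k.factorial else 0 := by
  have htail := tsum_ite_le_poissonTerm
  simp only [poissonTerm] at htail
  rw [htail, htail]
  exact sub_lt_sub_left (strictMono_nat_of_lt_succ poissonProbLt_self_lt_succ h) 1

/-- For S_m ~ Poisson(m), P(S_m ≥ m) is strictly decreasing in the positive integer m. -/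
theorem poisson_tail_strict_anti
    (m₁ m₂ : ℕ) (hm₁ : 0 < m₁) (h : m₁ < m₂) :
    (∑' k : ℕ, if m₂ ≤ k then Real.exp (-(m₂ : ℝ)) * (m₂ : ℝ) ^ k / k.factorial else 0)
      < ∑' k : ℕ, if m₁ ≤ k then Real.exp (-(m₁ : ℝ)) * (m₁ : ℝ) ^ k / k.factorial else 0 :=
  poisson_tail_strict_anti_general m₁ m₂ h
end

section
/- Let R_m have a Gamma(m,1) distribution, m a positive integer. Then P(R_m ≤ m) is strictly decreasing in m. -/
/-!
Write `I k T = ∫ x in 0..T, exp (-x) * x ^ k`. Integration by parts gives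
`I (k + 1) (k + 2) = (k + 1) * I k (k + 2) - exp (-(k + 2)) * (k + 2) ^ (k + 1)`, so comparing
consecutive terms reduces to `(k + 1) * ∫ x in k + 1..k + 2, exp (-x) * x ^ k < exp (-T) * T ^ (k + 1)`
with `T = k + 2`. The integrand is log-concave, so it lies below `exp (-T) * T ^ k * exp (2 / T * (T - x))`
(its tangent at `T` in logarithmic scale); integrating this exponential leaves
`(T - 1) * (exp (2 / T) - 1) < 2`, an instance of the Padé bound `exp c < (2 + c) / (2 - c)`.
-/

open MeasureTheory Real intervalIntegral

theorem integral_exp_neg_mul_pow_succ (k : ℕ) (T : ℝ) :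
    ∫ x in 0..T, exp (-x) * x ^ (k + 1)
      = (k + 1) * (∫ x in 0..T, exp (-x) * x ^ k) - exp (-T) * T ^ (k + 1) := by
  have hint (j : ℕ) : IntervalIntegrable (fun x => exp (-x) * x ^ j) volume 0 T :=
    (by fun_prop : Continuous fun x : ℝ => exp (-x) * x ^ j).intervalIntegrable 0 T
  have hderiv : ∀ x ∈ Set.uIcc 0 T, HasDerivAt (fun y => -(exp (-y) * y ^ (k + 1)))
      (exp (-x) * x ^ (k + 1) - (k + 1) * (exp (-x) * x ^ k)) x := by
    intro x _
    refine (((hasDerivAt_neg x).exp).mul (hasDerivAt_pow (k + 1) x)).neg.congr_deriv ?_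
    push_cast
    ring
  have hftc := integral_eq_sub_of_hasDerivAt hderiv ((hint _).sub ((hint k).const_mul _))
  rw [integral_sub (hint _) ((hint k).const_mul _), intervalIntegral.integral_const_mul] at hftc
  simp only [neg_zero, exp_zero, ne_eq, add_eq_zero, one_ne_zero, and_false,
    not_false_eq_true, zero_pow, mul_zero, sub_zero] at hftc
  linarith

theorem exp_neg_mul_pow_le (k : ℕ) {x T : ℝ} (hx : 0 ≤ x) (hT : 0 < T) :
    exp (-x) * x ^ k ≤ exp (-T) * T ^ k * exp ((1 - k / T) * (T - x)) := by
  have htangent : x ≤ T * exp (x / T - 1) := by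
    have := mul_le_mul_of_nonneg_left (add_one_le_exp (x / T - 1)) hT.le
    rwa [sub_add_cancel, mul_div_cancel₀ x hT.ne'] at this
  calc exp (-x) * x ^ k ≤ exp (-x) * (T * exp (x / T - 1)) ^ k := by gcongr
    _ = T ^ k * exp (-x + k * (x / T - 1)) := by rw [mul_pow, ← exp_nat_mul, exp_add]; ring
    _ = exp (-T) * T ^ k * exp ((1 - k / T) * (T - x)) := by
      rw [mul_right_comm, mul_comm, ← exp_add]
      congr 2
      field_simp
      ring

theorem integral_exp_mul_sub (a b : ℝ) {c : ℝ} (hc : c ≠ 0) :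
    ∫ x in a..b, exp (c * (b - x)) = (exp (c * (b - a)) - 1) / c := by
  rw [integral_comp_sub_left (fun y => exp (c * y)), sub_self,
    integral_comp_mul_left (fun y => exp y) hc, integral_exp, mul_zero, exp_zero, smul_eq_mul,
    inv_mul_eq_div]

theorem sub_one_mul_exp_two_div_sub_one_lt_two {T : ℝ} (hT : 1 < T) :
    (T - 1) * (exp (2 / T) - 1) < 2 := by
  have h := exp_lt_two_add_div_two_sub (x := 2 / T) (by positivity)
    (by rw [div_lt_iff₀ (by linarith)]; linarith)
  rw [lt_div_iff₀ (by rw [sub_pos, div_lt_iff₀ (by linarith)]; linarith)] at h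
  have h2 : exp (2 / T) * (2 - 2 / T) * T = 2 * (exp (2 / T) * (T - 1)) := by field_simp
  have h3 : (2 + 2 / T) * T = 2 * (T + 1) := by field_simp
  nlinarith

theorem integral_exp_neg_mul_pow_lt (k : ℕ) :
    (k + 1) * ∫ x in (k + 1 : ℝ)..(k + 2), exp (-x) * x ^ k
      < exp (-(k + 2)) * (k + 2) ^ (k + 1) := by
  set T : ℝ := k + 2 with hT_def
  have hT : 1 < T := by rw [hT_def]; linarith [k.cast_nonneg (α := ℝ)]
  have hc : 1 - k / T = 2 / T := by field_simp; ring
  have hbound : ∫ x in (k + 1 : ℝ)..T, exp (-x) * x ^ k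
      ≤ ∫ x in (k + 1 : ℝ)..T, exp (-T) * T ^ k * exp (2 / T * (T - x)) := by
    refine integral_mono_on (by linarith) (Continuous.intervalIntegrable (by fun_prop) _ _)
      (Continuous.intervalIntegrable (by fun_prop) _ _) fun x hx => ?_
    rw [← hc]
    exact exp_neg_mul_pow_le k (by linarith [hx.1]) (by linarith)
  rw [intervalIntegral.integral_const_mul, integral_exp_mul_sub _ _ (by positivity),
    show T - (k + 1) = 1 by ring, mul_one] at hbound
  calc (k + 1) * ∫ x in (k + 1 : ℝ)..T, exp (-x) * x ^ k
      ≤ (k + 1) * (exp (-T) * T ^ k * ((exp (2 / T) - 1) / (2 / T))) := by gcongr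
    _ = exp (-T) * T ^ (k + 1) * ((T - 1) * (exp (2 / T) - 1) / 2) := by
      rw [show (k : ℝ) + 1 = T - 1 by ring]
      field_simp
      ring
    _ < exp (-T) * T ^ (k + 1) := by
      have := sub_one_mul_exp_two_div_sub_one_lt_two hT
      exact mul_lt_of_lt_one_right (by positivity) (by linarith)

theorem strictAnti_integral_exp_neg_mul_pow_div_factorial :
    StrictAnti fun k : ℕ => (∫ x in (0 : ℝ)..(k + 1), exp (-x) * x ^ k) / k.factorial := by
  refine strictAnti_nat_of_succ_lt fun k => ?_
  have hint (a b : ℝ) : IntervalIntegrable (fun x => exp (-x) * x ^ k) volume a b :=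
    (by fun_prop : Continuous fun x : ℝ => exp (-x) * x ^ k).intervalIntegrable a b
  have hstep : ∫ x in (0 : ℝ)..(k + 2), exp (-x) * x ^ (k + 1)
      < (k + 1) * ∫ x in (0 : ℝ)..(k + 1), exp (-x) * x ^ k := by
    rw [integral_exp_neg_mul_pow_succ,
      ← integral_add_adjacent_intervals (hint 0 (k + 1)) (hint (k + 1) (k + 2))]
    linarith [integral_exp_neg_mul_pow_lt k]
  push_cast
  rw [show (k : ℝ) + 1 + 1 = k + 2 by ring, Nat.factorial_succ, Nat.cast_mul, ← div_div,
    div_lt_div_iff_of_pos_right (by positivity), div_lt_iff₀ (by positivity)]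
  push_cast
  linarith

theorem integral_div_Gamma_eq (k : ℕ) (T : ℝ) :
    ∫ x in (0 : ℝ)..T, exp (-x) * x ^ (k + 1 - 1) / Gamma (k + 1 : ℕ)
      = (∫ x in (0 : ℝ)..T, exp (-x) * x ^ k) / k.factorial := by
  rw [intervalIntegral.integral_div, Nat.add_sub_cancel, Nat.cast_succ, Gamma_nat_eq_factorial]

/-- For R_m ~ Gamma(m,1) (density `e^{-x} x^{m-1}/Γ(m)` on (0,∞)),
P(R_m ≤ m) is strictly decreasing in the positive integer m. -/
theorem gamma_cdf_at_mean_strict_anti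
    (m₁ m₂ : ℕ) (hm₁ : 0 < m₁) (h : m₁ < m₂) :
    (∫ x in (0:ℝ)..(m₂ : ℝ), Real.exp (-x) * x ^ (m₂ - 1) / Real.Gamma m₂)
      < ∫ x in (0:ℝ)..(m₁ : ℝ), Real.exp (-x) * x ^ (m₁ - 1) / Real.Gamma m₁ := by
  obtain ⟨k₁, rfl⟩ : ∃ k, m₁ = k + 1 := ⟨m₁ - 1, by omega⟩
  obtain ⟨k₂, rfl⟩ : ∃ k, m₂ = k + 1 := ⟨m₂ - 1, by omega⟩
  rw [integral_div_Gamma_eq, integral_div_Gamma_eq]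
  push_cast
  exact strictAnti_integral_exp_neg_mul_pow_div_factorial (by omega)
end

section
/- Let f be a continuously differentiable probability density on ℝ with bounded derivative, positive for sufficiently small x, and unimodal with mode a (f' ≥ 0 on (-∞,a), f' ≤ 0 on (a,∞)). Let Y be standard exponential independent of X ~ f, and let f_λ be the density of X + λY for λ > 0. Then f_λ is unimodal, and any critical point of f_λ is a mode of f_λ. -/
/-!
Writing `f_λ(x) = λ⁻¹ e^{-x/λ} ∫_{-∞}^x f(u) e^{u/λ} du` shows that `f_λ` solves the
relaxation equation `λ f_λ' = f - f_λ`, so `f_λ` increases exactly where it lies below `f`.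
Left of the mode, `f_λ ≤ f` because `f_λ(x)` is an average of values of `f` left of `x`.
The weighted gap `e^{x/λ} (f_λ - f)` has derivative `-e^{x/λ} f'`, so it is monotone right of
the mode: once `f_λ` meets `f` there it stays above it, and `f_λ` has a single peak. It must
meet `f`, since otherwise `f ≥ f_λ(a) > 0` on `[a, ∞)`, contradicting integrability; the same
argument rules out critical points left of the mode.
-/

open MeasureTheory Set Real

theorem hasDerivAt_integral_Iic {F : ℝ → ℝ} (hFc : Continuous F)
    (hFi : ∀ y, IntegrableOn F (Iic y)) (x : ℝ) :
    HasDerivAt (fun y => ∫ u in Iic y, F u) (F x) x := by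
  have hsplit : ∀ y, ∫ u in Iic y, F u = (∫ u in Iic x, F u) + ∫ t in x..y, F t :=
    fun y => by
      rw [← intervalIntegral.integral_Iic_sub_Iic (hFi x) (hFi y)]
      ring
  rw [show (fun y => ∫ u in Iic y, F u) = _ from funext hsplit]
  exact (intervalIntegral.integral_hasDerivAt_right
    (hFc.intervalIntegrable x x) (hFc.stronglyMeasurableAtFilter volume _)
    hFc.continuousAt).const_add _

theorem not_integrableOn_of_forall_le {α : Type*} [MeasurableSpace α] {μ : Measure α}
    {f : α → ℝ} {s : Set α} {m : ℝ} (hs : MeasurableSet s) (hμs : μ s = ⊤) (hm : 0 < m)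
    (hle : ∀ x ∈ s, m ≤ f x) : ¬ IntegrableOn f s μ := fun hf => by
  have hconst : IntegrableOn (fun _ => m) s μ :=
    hf.mono' aestronglyMeasurable_const <| (ae_restrict_mem hs).mono fun x hx => by
      rw [Real.norm_of_nonneg hm.le]
      exact hle x hx
  simp [hμs, hm.ne'] at hconst

theorem setIntegral_Ioi_comp_sub_left (g : ℝ → ℝ) (x : ℝ) :
    ∫ z in Ioi 0, g (x - z) = ∫ u in Iic x, g u := by
  have hpre : (fun z => x - z) ⁻¹' Iio x = Ioi 0 := by ext z; simp
  rw [integral_Iic_eq_integral_Iio, ← hpre,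
    (Measure.measurePreserving_sub_left volume x).setIntegral_preimage_emb
      (MeasurableEquiv.subLeft x).measurableEmbedding]

theorem integral_Ioi_one_div_mul_exp_neg_div {lam : ℝ} (hlam : 0 < lam) :
    ∫ z in Ioi 0, (1 / lam) * exp (-z / lam) = 1 := by
  have hexp : ∀ z, exp (-z / lam) = exp (-lam⁻¹ * z) := fun z => by ring_nf
  simp_rw [hexp]
  rw [integral_const_mul, integral_exp_mul_Ioi (by simpa using hlam)]
  field_simp
  simp

/-- The density `f_λ` of `X + λY`. -/
noncomputable def expSmooth (lam : ℝ) (f : ℝ → ℝ) (x : ℝ) : ℝ :=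
  ∫ z in Ioi (0 : ℝ), f (x - z) * ((1 / lam) * exp (-z / lam))

section expSmooth

variable {f : ℝ → ℝ} {lam : ℝ}

theorem integrableOn_expSmooth_integrand (hf : Integrable f) (hlam : 0 < lam) (x : ℝ) :
    IntegrableOn (fun z => f (x - z) * ((1 / lam) * exp (-z / lam))) (Ioi 0) := by
  refine (hf.comp_sub_left x).integrableOn.mul_bdd (c := 1 / lam) (by fun_prop) ?_
  filter_upwards [ae_restrict_mem measurableSet_Ioi] with z (hz : 0 < z)
  rw [Real.norm_of_nonneg (by positivity)]
  exact mul_le_of_le_one_right (by positivity)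
    (exp_le_one_iff.2 (div_nonpos_of_nonpos_of_nonneg (by linarith) hlam.le))

theorem expSmooth_eq_mul_integral_Iic (lam : ℝ) (f : ℝ → ℝ) (x : ℝ) :
    expSmooth lam f x = (1 / lam) * exp (-x / lam) * ∫ u in Iic x, f u * exp (u / lam) := by
  have hkernel : ∀ z, f (x - z) * ((1 / lam) * exp (-z / lam))
      = (1 / lam) * exp (-x / lam) * (f (x - z) * exp ((x - z) / lam)) := fun z => by
    rw [show -z / lam = -x / lam + (x - z) / lam by ring, exp_add]
    ring
  simp_rw [expSmooth, hkernel, integral_const_mul,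
    setIntegral_Ioi_comp_sub_left (fun u => f u * exp (u / lam))]

theorem hasDerivAt_expSmooth (hf : Integrable f) (hfc : Continuous f) (hlam : 0 < lam)
    (x : ℝ) : HasDerivAt (expSmooth lam f) ((f x - expSmooth lam f x) / lam) x := by
  have hFi : ∀ y, IntegrableOn (fun u => f u * exp (u / lam)) (Iic y) := fun y => by
    refine hf.integrableOn.mul_bdd (c := exp (y / lam)) (by fun_prop) ?_
    filter_upwards [ae_restrict_mem measurableSet_Iic] with u (hu : u ≤ y)
    rw [Real.norm_of_nonneg (exp_pos _).le]
    gcongr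
  have hE : HasDerivAt (fun y => (1 / lam) * exp (-y / lam))
      ((1 / lam) * (exp (-x / lam) * (-1 / lam))) x :=
    (((hasDerivAt_id x).neg.div_const lam).exp).const_mul _
  rw [show expSmooth lam f = _ from funext (expSmooth_eq_mul_integral_Iic lam f)]
  refine (hE.mul (hasDerivAt_integral_Iic (by fun_prop) hFi x)).congr_deriv ?_
  have hinv : exp (-x / lam) * exp (x / lam) = 1 := by
    rw [← exp_add, neg_div, neg_add_cancel, exp_zero]
  linear_combination (f x / lam) * hinv

theorem expSmooth_pos (hf0 : ∀ x, 0 ≤ f x) (hf : Integrable f) (hlam : 0 < lam)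
    (hpos : ∃ x₁, ∀ x < x₁, 0 < f x) (x : ℝ) : 0 < expSmooth lam f x := by
  obtain ⟨x₁, hx₁⟩ := hpos
  refine (setIntegral_pos_iff_support_of_nonneg_ae ?_
    (integrableOn_expSmooth_integrand hf hlam x)).2 ?_
  · exact Filter.Eventually.of_forall fun z => mul_nonneg (hf0 _) (by positivity)
  · refine lt_of_lt_of_le (by simp) (measure_mono (μ := volume) (s := Ioi (max 0 (x - x₁)))
      fun z (hz : _ < z) => ⟨?_, mem_Ioi.2 ((le_max_left _ _).trans_lt hz)⟩)
    have hz' : x - x₁ < z := (le_max_right _ _).trans_lt hz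
    exact (mul_pos (hx₁ _ (by linarith)) (by positivity)).ne'

theorem expSmooth_le_of_monotoneOn (hf : Integrable f) (hlam : 0 < lam) {x : ℝ}
    (hmono : MonotoneOn f (Iic x)) : expSmooth lam f x ≤ f x := by
  have hkernel : IntegrableOn (fun z => (1 / lam) * exp (-z / lam)) (Ioi 0) :=
    .of_integral_ne_zero (by rw [integral_Ioi_one_div_mul_exp_neg_div hlam]; exact one_ne_zero)
  calc expSmooth lam f x ≤ ∫ z in Ioi 0, f x * ((1 / lam) * exp (-z / lam)) := by
        refine setIntegral_mono_on (integrableOn_expSmooth_integrand hf hlam x)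
          (hkernel.const_mul (f x)) measurableSet_Ioi fun z (hz : 0 < z) => ?_
        gcongr
        exact hmono (mem_Iic.2 (by linarith)) self_mem_Iic (by linarith)
    _ = f x := by rw [integral_const_mul, integral_Ioi_one_div_mul_exp_neg_div hlam, mul_one]

end expSmooth

section relaxation

variable {f g : ℝ → ℝ} {lam : ℝ}

theorem monotoneOn_of_le_of_hasDerivAt (hlam : 0 < lam)
    (hg : ∀ x, HasDerivAt g ((f x - g x) / lam) x) {s : Set ℝ} (hs : Convex ℝ s)
    (hle : ∀ x ∈ s, g x ≤ f x) : MonotoneOn g s :=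
  monotoneOn_of_hasDerivWithinAt_nonneg hs
    (fun x _ => (hg x).continuousAt.continuousWithinAt) (fun x _ => (hg x).hasDerivWithinAt)
    fun x hx => div_nonneg (sub_nonneg.2 (hle x (interior_subset hx))) hlam.le

theorem antitoneOn_of_ge_of_hasDerivAt (hlam : 0 < lam)
    (hg : ∀ x, HasDerivAt g ((f x - g x) / lam) x) {s : Set ℝ} (hs : Convex ℝ s)
    (hle : ∀ x ∈ s, f x ≤ g x) : AntitoneOn g s :=
  antitoneOn_of_hasDerivWithinAt_nonpos hs
    (fun x _ => (hg x).continuousAt.continuousWithinAt) (fun x _ => (hg x).hasDerivWithinAt)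
    fun x hx => div_nonpos_of_nonpos_of_nonneg (sub_nonpos.2 (hle x (interior_subset hx))) hlam.le

noncomputable def weightedGap (lam : ℝ) (f g : ℝ → ℝ) (x : ℝ) : ℝ :=
  exp (x / lam) * (g x - f x)

theorem weightedGap_nonneg_iff {x : ℝ} : 0 ≤ weightedGap lam f g x ↔ f x ≤ g x := by
  rw [weightedGap, mul_nonneg_iff_of_pos_left (exp_pos _), sub_nonneg]

theorem weightedGap_nonpos_iff {x : ℝ} : weightedGap lam f g x ≤ 0 ↔ g x ≤ f x := by
  rw [weightedGap, ← neg_nonneg, ← mul_neg, mul_nonneg_iff_of_pos_left (exp_pos _), neg_nonneg,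
    sub_nonpos]

theorem hasDerivAt_weightedGap (hg : ∀ x, HasDerivAt g ((f x - g x) / lam) x)
    (hf : Differentiable ℝ f) (x : ℝ) :
    HasDerivAt (weightedGap lam f g) (-(exp (x / lam) * deriv f x)) x := by
  have hE : HasDerivAt (fun y => exp (y / lam)) (exp (x / lam) * (1 / lam)) x :=
    ((hasDerivAt_id x).div_const lam).exp
  refine (hE.mul ((hg x).sub (hf x).hasDerivAt)).congr_deriv ?_
  simp only [Pi.sub_apply]
  ring

theorem weightedGap_monotoneOn_Ici (hg : ∀ x, HasDerivAt g ((f x - g x) / lam) x)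
    (hf : Differentiable ℝ f) {a : ℝ} (hf' : ∀ x > a, deriv f x ≤ 0) :
    MonotoneOn (weightedGap lam f g) (Ici a) :=
  monotoneOn_of_hasDerivWithinAt_nonneg (convex_Ici a)
    (fun x _ => (hasDerivAt_weightedGap hg hf x).continuousAt.continuousWithinAt)
    (fun x _ => (hasDerivAt_weightedGap hg hf x).hasDerivWithinAt)
    fun x hx => by
      rw [interior_Ici] at hx
      exact neg_nonneg.2 (mul_nonpos_of_nonneg_of_nonpos (exp_pos _).le (hf' x hx))

theorem weightedGap_antitoneOn_Iic (hg : ∀ x, HasDerivAt g ((f x - g x) / lam) x)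
    (hf : Differentiable ℝ f) {a : ℝ} (hf' : ∀ x < a, 0 ≤ deriv f x) :
    AntitoneOn (weightedGap lam f g) (Iic a) :=
  antitoneOn_of_hasDerivWithinAt_nonpos (convex_Iic a)
    (fun x _ => (hasDerivAt_weightedGap hg hf x).continuousAt.continuousWithinAt)
    (fun x _ => (hasDerivAt_weightedGap hg hf x).hasDerivWithinAt)
    fun x hx => by
      rw [interior_Iic] at hx
      exact neg_nonpos.2 (mul_nonneg (exp_pos _).le (hf' x hx))

end relaxation

section unimodal

variable {f g : ℝ → ℝ} {lam a : ℝ}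

theorem monotoneOn_Iic_antitoneOn_Ici_of_eq (hlam : 0 < lam)
    (hg : ∀ x, HasDerivAt g ((f x - g x) / lam) x) (hf : Differentiable ℝ f)
    (hf' : ∀ x > a, deriv f x ≤ 0) (hle : ∀ x ≤ a, g x ≤ f x) (c : ℝ) (hac : a ≤ c)
    (hc : g c = f c) : MonotoneOn g (Iic c) ∧ AntitoneOn g (Ici c) := by
  have hgap : weightedGap lam f g c = 0 := by simp [weightedGap, hc]
  have hmono := weightedGap_monotoneOn_Ici (lam := lam) hg hf hf'
  refine ⟨monotoneOn_of_le_of_hasDerivAt hlam hg (convex_Iic c) fun x (hx : x ≤ c) => ?_,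
    antitoneOn_of_ge_of_hasDerivAt hlam hg (convex_Ici c) fun x (hx : c ≤ x) =>
      weightedGap_nonneg_iff.1 (hgap ▸ hmono hac (hac.trans hx) hx)⟩
  obtain hxa | hax := le_or_gt x a
  · exact hle x hxa
  · exact weightedGap_nonpos_iff.1 (hgap ▸ hmono hax.le hac hx)

theorem exists_ge_eq_of_integrable (hlam : 0 < lam)
    (hg : ∀ x, HasDerivAt g ((f x - g x) / lam) x) (hf : Continuous f) (hfi : Integrable f)
    (hle : ∀ x ≤ a, g x ≤ f x) (hga : 0 < g a) : ∃ c, a ≤ c ∧ g c = f c := by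
  obtain ⟨b, hab, hb⟩ : ∃ b, a ≤ b ∧ f b ≤ g b := by
    by_contra! hlt
    have hmono := monotoneOn_of_le_of_hasDerivAt hlam hg (convex_Ici a) fun x hx => (hlt x hx).le
    exact not_integrableOn_of_forall_le measurableSet_Ici (by simp) hga
      (fun x hx => (hmono self_mem_Ici hx hx).trans (hlt x hx).le) hfi.integrableOn
  have hcont : Continuous fun x => g x - f x :=
    (continuous_iff_continuousAt.2 fun x => (hg x).continuousAt).sub hf
  obtain ⟨c, hc, hc0⟩ := intermediate_value_Icc hab hcont.continuousOn
    ⟨sub_nonpos.2 (hle a le_rfl), sub_nonneg.2 hb⟩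
  exact ⟨c, hc.1, sub_eq_zero.1 hc0⟩

theorem ne_of_lt_of_pos (hlam : 0 < lam)
    (hg : ∀ x, HasDerivAt g ((f x - g x) / lam) x) (hf : Differentiable ℝ f)
    (hf' : ∀ x < a, 0 ≤ deriv f x) (hfi : Integrable f) (hle : ∀ x ≤ a, g x ≤ f x)
    {x₀ : ℝ} (hx₀ : x₀ < a) (hgx₀ : 0 < g x₀) : g x₀ ≠ f x₀ := by
  intro h
  have hgap : weightedGap lam f g x₀ = 0 := by simp [weightedGap, h]
  have heq : ∀ x ∈ Iic x₀, g x = f x := fun x (hx : x ≤ x₀) =>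
    le_antisymm (hle x (hx.trans hx₀.le)) <| weightedGap_nonneg_iff.1 <|
      hgap ▸ weightedGap_antitoneOn_Iic hg hf hf' (hx.trans hx₀.le) hx₀.le hx
  have hconst : ∀ x ∈ Iic x₀, g x = g x₀ := fun x hx =>
    le_antisymm
      (monotoneOn_of_le_of_hasDerivAt hlam hg (convex_Iic x₀) (fun y hy => (heq y hy).le)
        hx self_mem_Iic hx)
      (antitoneOn_of_ge_of_hasDerivAt hlam hg (convex_Iic x₀) (fun y hy => (heq y hy).ge)
        hx self_mem_Iic hx)
  exact not_integrableOn_of_forall_le measurableSet_Iic (by simp) hgx₀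
    (fun x hx => ((hconst x hx).symm.trans (heq x hx)).le) hfi.integrableOn

end unimodal

theorem exp_convolution_unimodal_general
    (f : ℝ → ℝ)
    (hdens_nonneg : ∀ x, 0 ≤ f x)
    (hdens_int : ∫ x, f x = 1)
    (hC1 : ContDiff ℝ 1 f)
    (hpos : ∃ x₁, ∀ x < x₁, 0 < f x)
    (a : ℝ)
    (hmode : (∀ x < a, 0 ≤ deriv f x) ∧ (∀ x > a, deriv f x ≤ 0))
    (lam : ℝ) (hlam : 0 < lam)
    (flam : ℝ → ℝ)
    (hflam : ∀ x, flam x = ∫ z in Set.Ioi (0:ℝ), f (x - z) * ((1 / lam) * Real.exp (-z / lam))) :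
    ((∃ c, MonotoneOn flam (Set.Iic c) ∧ AntitoneOn flam (Set.Ici c)) ∧
      ∀ x₀, deriv flam x₀ = 0 → ∀ x, flam x ≤ flam x₀) := by
  have hfi : Integrable f := integrable_of_integral_eq_one hdens_int
  have hf : Differentiable ℝ f := hC1.differentiable one_ne_zero
  obtain rfl : flam = expSmooth lam f := funext hflam
  have hg := hasDerivAt_expSmooth hfi hf.continuous hlam
  have hgpos := expSmooth_pos hdens_nonneg hfi hlam hpos
  have hfmono : MonotoneOn f (Iic a) :=
    monotoneOn_of_deriv_nonneg (convex_Iic a) hf.continuous.continuousOn hf.differentiableOn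
      fun y hy => hmode.1 y (by simpa using hy)
  have hle : ∀ x ≤ a, expSmooth lam f x ≤ f x := fun x hx =>
    expSmooth_le_of_monotoneOn hfi hlam (hfmono.mono (Iic_subset_Iic.2 hx))
  have hpeak := monotoneOn_Iic_antitoneOn_Ici_of_eq hlam hg hf hmode.2 hle
  obtain ⟨c, hac, hc⟩ := exists_ge_eq_of_integrable hlam hg hf.continuous hfi hle (hgpos a)
  refine ⟨⟨c, hpeak c hac hc⟩, fun x₀ hx₀ x => ?_⟩
  have hcrit : expSmooth lam f x₀ = f x₀ := by
    rw [(hg x₀).deriv, div_eq_zero_iff, sub_eq_zero] at hx₀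
    exact (hx₀.resolve_right hlam.ne').symm
  obtain hlt | hge := lt_or_ge x₀ a
  · exact absurd hcrit (ne_of_lt_of_pos hlam hg hf hmode.1 hfi hle hlt (hgpos x₀))
  · exact isMaxOn_univ_of_mono_anti (hpeak x₀ hge hcrit).1 (hpeak x₀ hge hcrit).2 (mem_univ x)

/-- Let f be a continuously differentiable probability density with bounded derivative,
positive for sufficiently small x, and unimodal with mode a.  Let f_λ be the density of
X + λY where X ~ f and Y ~ Exp(1), λ > 0, i.e.
f_λ(x) = ∫₀^∞ f(x-z) (1/λ) e^{-z/λ} dz.  Then f_λ is unimodal, and any critical point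
of f_λ is a mode (global maximizer) of f_λ. -/
theorem exp_convolution_unimodal
    (f : ℝ → ℝ)
    (hdens_nonneg : ∀ x, 0 ≤ f x)
    (hdens_int : ∫ x, f x = 1)
    (hC1 : ContDiff ℝ 1 f)
    (hbdd : ∃ C, ∀ x, |deriv f x| ≤ C)
    (hpos : ∃ x₁, ∀ x < x₁, 0 < f x)
    (a : ℝ)
    (hmode : (∀ x < a, 0 ≤ deriv f x) ∧ (∀ x > a, deriv f x ≤ 0))
    (lam : ℝ) (hlam : 0 < lam)
    (flam : ℝ → ℝ)
    (hflam : ∀ x, flam x = ∫ z in Set.Ioi (0:ℝ), f (x - z) * ((1 / lam) * Real.exp (-z / lam))) :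
    ((∃ c, MonotoneOn flam (Set.Iic c) ∧ AntitoneOn flam (Set.Ici c)) ∧
      ∀ x₀, deriv flam x₀ = 0 → ∀ x, flam x ≤ flam x₀) :=
  exp_convolution_unimodal_general f hdens_nonneg hdens_int hC1 hpos a hmode lam hlam flam hflam
end

section
/- Under the same hypotheses on f (continuously differentiable with bounded derivative, positive for small x, unimodal), if 0 < λ₀ < λ, then every mode of f_λ is strictly larger than every mode of f_{λ₀}, where f_λ is the density of X + λY with Y ~ Exp(1) independent of X ~ f. -/
/-!
Write `f_μ` for `expConv f μ`. Since `e^{x/μ} f_μ(x) = μ⁻¹ ∫_{-∞}^x e^{u/μ} f(u) du`, the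
smoothed density solves `μ f_μ' = f - f_μ`; so `f_μ(m) = f(m)` at a mode `m` of `f_μ`, and
unimodality of `f` gives `f_μ ≤ f` on `(-∞, m]`.

For `μ₀ < μ` the gap `Φ = e^{x/μ} (f_μ - f_{μ₀})` (`expConvGap`) has derivative
`e^{x/μ} (f - f_{μ₀}) (1/μ - 1/μ₀)`, so `Φ` is nonincreasing on `(-∞, m₀]` for a mode `m₀` of
`f_{μ₀}`, and `Φ → 0` at `-∞`; thus `Φ ≤ 0` there. If a mode `m` of `f_μ` satisfied `m ≤ m₀`,
then `Φ(m) ≥ 0` because `f_μ(m) = f(m) ≥ f_{μ₀}(m)`. Hence `Φ ≡ 0` on `(-∞, m]`, which forces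
`f = f_{μ₀}` there; then `f_{μ₀}' = 0`, and `f` is a constant on a half-line, positive because
`f > 0` far to the left, contradicting integrability.
-/

open MeasureTheory Set Filter Topology Real

theorem setIntegral_Ioi_zero_comp_sub_left {E : Type*} [NormedAddCommGroup E] [NormedSpace ℝ E]
    (g : ℝ → E) (x : ℝ) : ∫ z in Ioi 0, g (x - z) = ∫ u in Iio x, g u := by
  have h := (volume.measurePreserving_sub_left x).setIntegral_preimage_emb
    (MeasurableEquiv.subLeft x).measurableEmbedding g (Iio x)
  have hpre : (fun z => x - z) ⁻¹' Iio x = Ioi 0 := by ext z; simp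
  rwa [hpre] at h

theorem hasDerivAt_setIntegral_Iic {g : ℝ → ℝ} (hg : Continuous g)
    (hint : ∀ x, IntegrableOn g (Iic x)) (x : ℝ) :
    HasDerivAt (fun y => ∫ u in Iic y, g u) (g x) x := by
  have heq : (fun y => ∫ u in Iic y, g u)
      = fun y => (∫ u in Iic 0, g u) + ∫ u in (0:ℝ)..y, g u := by
    ext y
    rw [← intervalIntegral.integral_Iic_sub_Iic (hint 0) (hint y)]
    ring
  rw [heq]
  exact (hg.integral_hasStrictDerivAt 0 x).hasDerivAt.const_add _

section

variable {f : ℝ → ℝ} {μ : ℝ}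

noncomputable def expConv (f : ℝ → ℝ) (μ x : ℝ) : ℝ :=
  ∫ z in Ioi (0:ℝ), f (x - z) * ((1 / μ) * exp (-z / μ))

theorem integrableOn_exp_div_mul_Iic (hf : Integrable f) (hμ : 0 < μ) (x : ℝ) :
    IntegrableOn (fun u => exp (u / μ) * f u) (Iic x) := by
  refine hf.integrableOn.bdd_mul (c := exp (x / μ)) (by fun_prop) ?_
  refine (ae_restrict_iff' measurableSet_Iic).2 (Eventually.of_forall fun u hu => ?_)
  rw [norm_of_nonneg (exp_pos _).le]
  exact exp_le_exp.2 (div_le_div_of_nonneg_right hu hμ.le)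

theorem exp_mul_expConv (f : ℝ → ℝ) (μ x : ℝ) :
    exp (x / μ) * expConv f μ x = (∫ u in Iic x, exp (u / μ) * f u) / μ := by
  rw [integral_Iic_eq_integral_Iio, ← setIntegral_Ioi_zero_comp_sub_left, expConv,
    ← integral_const_mul, ← integral_div]
  refine setIntegral_congr_fun measurableSet_Ioi fun z _ => ?_
  rw [sub_div, exp_sub, neg_div, exp_neg]
  field_simp

theorem hasDerivAt_exp_mul_expConv (hc : Continuous f) (hi : Integrable f) (hμ : 0 < μ)
    (x : ℝ) : HasDerivAt (fun y => exp (y / μ) * expConv f μ y) (exp (x / μ) * f x / μ) x := by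
  simp_rw [exp_mul_expConv]
  exact (hasDerivAt_setIntegral_Iic (by fun_prop) (integrableOn_exp_div_mul_Iic hi hμ)
    x).div_const μ

theorem hasDerivAt_expConv (hc : Continuous f) (hi : Integrable f) (hμ : 0 < μ) (x : ℝ) :
    HasDerivAt (expConv f μ) ((f x - expConv f μ x) / μ) x := by
  have h : HasDerivAt (fun y => exp (-(y / μ)) * (exp (y / μ) * expConv f μ y))
      (exp (-(x / μ)) * -(1 / μ) * (exp (x / μ) * expConv f μ x)
        + exp (-(x / μ)) * (exp (x / μ) * f x / μ)) x :=
    (((hasDerivAt_id x).div_const μ).neg.exp).mul (hasDerivAt_exp_mul_expConv hc hi hμ x)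
  have hK : (fun y => exp (-(y / μ)) * (exp (y / μ) * expConv f μ y)) = expConv f μ := by
    ext y; rw [← mul_assoc, ← exp_add, neg_add_cancel, exp_zero, one_mul]
  rw [hK] at h
  convert h using 1
  rw [exp_neg]
  field_simp
  ring

theorem expConv_eq_of_isMaxOn (hc : Continuous f) (hi : Integrable f) (hμ : 0 < μ) {m : ℝ}
    (hm : IsMaxOn (expConv f μ) univ m) : expConv f μ m = f m := by
  have h := (hm.isLocalMax univ_mem).hasDerivAt_eq_zero (hasDerivAt_expConv hc hi hμ m)
  rw [div_eq_zero_iff, sub_eq_zero] at h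
  exact (h.resolve_right hμ.ne').symm

theorem expConv_nonneg (h0 : ∀ x, 0 ≤ f x) (hμ : 0 ≤ μ) (x : ℝ) : 0 ≤ expConv f μ x :=
  setIntegral_nonneg measurableSet_Ioi fun z _ => by have := h0 (x - z); positivity

theorem expConv_le_iff (hμ : 0 < μ) {x c : ℝ} :
    expConv f μ x ≤ c ↔ ∫ u in Iic x, exp (u / μ) * f u ≤ μ * exp (x / μ) * c := by
  rw [mul_assoc, ← div_le_iff₀' hμ, ← exp_mul_expConv, mul_le_mul_iff_of_pos_left (exp_pos _)]

theorem expConv_le (h0 : ∀ x, 0 ≤ f x) (hi : Integrable f) (hμ : 0 < μ) (x : ℝ) :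
    expConv f μ x ≤ (∫ u, f u) / μ := by
  rw [expConv_le_iff hμ, mul_right_comm, mul_div_cancel₀ _ hμ.ne', mul_comm,
    ← integral_const_mul]
  refine (setIntegral_mono_on (integrableOn_exp_div_mul_Iic hi hμ x)
    (hi.const_mul _).integrableOn measurableSet_Iic fun u hu => ?_).trans
    (setIntegral_le_integral (hi.const_mul _) (Eventually.of_forall fun u => ?_))
  · exact mul_le_mul_of_nonneg_right (exp_le_exp.2 (div_le_div_of_nonneg_right hu hμ.le)) (h0 u)
  · exact mul_nonneg (exp_pos _).le (h0 u)

theorem expConv_le_of_monotoneOn (hi : Integrable f) (hμ : 0 < μ) {x : ℝ}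
    (hmon : MonotoneOn f (Iic x)) : expConv f μ x ≤ f x := by
  have hint : IntegrableOn (fun u => exp (u / μ)) (Iic x) := by
    simpa only [div_eq_inv_mul] using integrableOn_exp_mul_Iic (inv_pos.2 hμ) x
  have hexp : ∫ u in Iic x, exp (u / μ) * f x = μ * exp (x / μ) * f x := by
    simp_rw [integral_mul_const, div_eq_inv_mul, integral_exp_mul_Iic (inv_pos.2 hμ),
      div_inv_eq_mul, mul_comm]
  rw [expConv_le_iff hμ, ← hexp]
  exact setIntegral_mono_on (integrableOn_exp_div_mul_Iic hi hμ x) (hint.mul_const _)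
    measurableSet_Iic fun u hu => mul_le_mul_of_nonneg_left (hmon hu self_mem_Iic hu) (exp_pos _).le

theorem expConv_le_of_isMaxOn_of_le (hc : Continuous f) (hi : Integrable f) (hμ : 0 < μ)
    {a m y : ℝ} (hmon : MonotoneOn f (Iic a)) (hanti : AntitoneOn f (Ici a))
    (hm : IsMaxOn (expConv f μ) univ m) (hy : y ≤ m) : expConv f μ y ≤ f y := by
  rcases le_or_gt y a with hya | hay
  · exact expConv_le_of_monotoneOn hi hμ (hmon.mono (Iic_subset_Iic.2 hya))
  · calc expConv f μ y ≤ expConv f μ m := hm (mem_univ y)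
      _ = f m := expConv_eq_of_isMaxOn hc hi hμ hm
      _ ≤ f y := hanti hay.le (hay.le.trans hy) hy

noncomputable def expConvGap (f : ℝ → ℝ) (μ₀ μ x : ℝ) : ℝ :=
  exp (x / μ) * (expConv f μ x - expConv f μ₀ x)

variable {μ₀ : ℝ}

theorem hasDerivAt_expConvGap (hc : Continuous f) (hi : Integrable f) (hμ₀ : 0 < μ₀)
    (hμ : 0 < μ) (x : ℝ) :
    HasDerivAt (expConvGap f μ₀ μ)
      (exp (x / μ) * (f x - expConv f μ₀ x) * (1 / μ - 1 / μ₀)) x := by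
  have hfun : expConvGap f μ₀ μ
      = fun y => exp (y / μ) * expConv f μ y - exp (y / μ) * expConv f μ₀ y :=
    funext fun y => mul_sub _ _ _
  rw [hfun]
  refine ((hasDerivAt_exp_mul_expConv hc hi hμ x).sub
    ((((hasDerivAt_id x).div_const μ).exp).mul (hasDerivAt_expConv hc hi hμ₀ x))).congr_deriv ?_
  simp only [id]
  ring

theorem tendsto_expConvGap_atBot (h0 : ∀ x, 0 ≤ f x) (hi : Integrable f) (hμ₀ : 0 < μ₀)
    (hμ : 0 < μ) : Tendsto (expConvGap f μ₀ μ) atBot (𝓝 0) := by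
  have hbdd : ∀ x, ‖expConv f μ x - expConv f μ₀ x‖ ≤ (∫ u, f u) / μ + (∫ u, f u) / μ₀ := by
    intro x
    have := expConv_le h0 hi hμ x
    have := expConv_le h0 hi hμ₀ x
    have := expConv_nonneg h0 hμ.le x
    have := expConv_nonneg h0 hμ₀.le x
    rw [Real.norm_eq_abs, abs_le]
    constructor <;> linarith
  exact (tendsto_exp_atBot.comp (tendsto_id.atBot_div_const hμ)).zero_mul_isBoundedUnder_le
    (isBoundedUnder_of ⟨_, hbdd⟩)

theorem eqOn_expConvGap_zero_of_nonneg (h0 : ∀ x, 0 ≤ f x) (hc : Continuous f) (hi : Integrable f)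
    {a m₀ x : ℝ} (hmon : MonotoneOn f (Iic a)) (hanti : AntitoneOn f (Ici a)) (hμ₀ : 0 < μ₀)
    (hμ₀μ : μ₀ < μ) (hm₀ : IsMaxOn (expConv f μ₀) univ m₀) (hx : x ≤ m₀)
    (hgap : 0 ≤ expConvGap f μ₀ μ x) : EqOn (expConvGap f μ₀ μ) 0 (Iic x) := by
  have hμ := hμ₀.trans hμ₀μ
  have hgap' := hasDerivAt_expConvGap hc hi hμ₀ hμ
  have hanti_gap : AntitoneOn (expConvGap f μ₀ μ) (Iic m₀) := by
    refine antitoneOn_of_deriv_nonpos (convex_Iic m₀)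
      (fun y _ => (hgap' y).continuousAt.continuousWithinAt)
      (fun y _ => (hgap' y).differentiableAt.differentiableWithinAt) fun y hy => ?_
    rw [interior_Iic] at hy
    rw [(hgap' y).deriv]
    refine mul_nonpos_of_nonneg_of_nonpos (mul_nonneg (exp_pos _).le (sub_nonneg.2 ?_)) ?_
    · exact expConv_le_of_isMaxOn_of_le hc hi hμ₀ hmon hanti hm₀ hy.le
    · exact sub_nonpos.2 (one_div_le_one_div_of_le hμ₀ hμ₀μ.le)
  have hnonpos : ∀ y ≤ m₀, expConvGap f μ₀ μ y ≤ 0 := fun y hy =>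
    ge_of_tendsto (tendsto_expConvGap_atBot h0 hi hμ₀ hμ) <| by
      filter_upwards [eventually_le_atBot y] with z hz
      exact hanti_gap (hz.trans hy) hy hz
  exact fun y hy => le_antisymm (hnonpos y (hy.trans hx))
    (hgap.trans (hanti_gap (hy.trans hx) hx hy))

theorem eqOn_expConv_of_eqOn_expConvGap_zero (hc : Continuous f) (hi : Integrable f)
    (hμ₀ : 0 < μ₀) (hμ₀μ : μ₀ < μ) {x : ℝ} (hgap : EqOn (expConvGap f μ₀ μ) 0 (Iic x)) :
    EqOn f (expConv f μ₀) (Iio x) := by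
  intro y hy
  have hconst : expConvGap f μ₀ μ =ᶠ[𝓝 y] fun _ => 0 :=
    eventually_of_mem (Iic_mem_nhds hy) hgap
  have h := (hasDerivAt_expConvGap hc hi hμ₀ (hμ₀.trans hμ₀μ) y).unique
    ((hasDerivAt_const y (0:ℝ)).congr_of_eventuallyEq hconst)
  simpa [(exp_pos _).ne', sub_eq_zero, hμ₀μ.ne'] using h

theorem not_eqOn_expConv_Iio (hc : Continuous f) (hi : Integrable f) (hμ : 0 < μ)
    (hpos : ∃ x₁, ∀ x < x₁, 0 < f x) (x : ℝ) : ¬ EqOn f (expConv f μ) (Iio x) := by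
  intro h
  have hderiv := hasDerivAt_expConv hc hi hμ
  obtain ⟨k, hk⟩ := isOpen_Iio.exists_is_const_of_deriv_eq_zero isPreconnected_Iio
    (fun y _ => (hderiv y).differentiableAt.differentiableWithinAt)
    (fun y hy => by simp [(hderiv y).deriv, ← h hy])
  have hint : IntegrableOn (fun _ => k) (Iio x) :=
    hi.integrableOn.congr_fun (fun y hy => (h hy).trans (hk y hy)) measurableSet_Iio
  have hk0 : k = 0 := by
    rw [integrableOn_const_iff] at hint
    simpa using hint
  obtain ⟨x₁, hx₁⟩ := hpos
  have hy : min x x₁ - 1 < x := by linarith [min_le_left x x₁]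
  have := hx₁ (min x x₁ - 1) (by linarith [min_le_right x x₁])
  rw [h hy, hk _ hy, hk0] at this
  exact lt_irrefl 0 this

end

theorem exp_convolution_mode_strict_mono_general
    (f : ℝ → ℝ)
    (hdens_nonneg : ∀ x, 0 ≤ f x)
    (hdens_int : ∫ x, f x = 1)
    (hC1 : ContDiff ℝ 1 f)
    (hpos : ∃ x₁, ∀ x < x₁, 0 < f x)
    (a : ℝ)
    (hmode : (∀ x < a, 0 ≤ deriv f x) ∧ (∀ x > a, deriv f x ≤ 0))
    (lam₀ lam : ℝ) (hlam₀ : 0 < lam₀) (hlam : lam₀ < lam)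
    (flam₀ flam : ℝ → ℝ)
    (hflam₀ : ∀ x, flam₀ x
      = ∫ z in Set.Ioi (0:ℝ), f (x - z) * ((1 / lam₀) * Real.exp (-z / lam₀)))
    (hflam : ∀ x, flam x
      = ∫ z in Set.Ioi (0:ℝ), f (x - z) * ((1 / lam) * Real.exp (-z / lam)))
    (x₀ x₁ : ℝ)
    (hx₀ : ∀ x, flam₀ x ≤ flam₀ x₀)
    (hx₁ : ∀ x, flam x ≤ flam x₁) :
    x₀ < x₁ := by
  have hc : Continuous f := hC1.continuous
  have hi : Integrable f := .of_integral_ne_zero (by simp [hdens_int])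
  have hdiff := hC1.differentiable one_ne_zero
  have hmon : MonotoneOn f (Iic a) := monotoneOn_of_deriv_nonneg (convex_Iic a)
    hc.continuousOn hdiff.differentiableOn (by simpa using hmode.1)
  have hanti : AntitoneOn f (Ici a) := antitoneOn_of_deriv_nonpos (convex_Ici a)
    hc.continuousOn hdiff.differentiableOn (by simpa using hmode.2)
  obtain rfl : flam₀ = expConv f lam₀ := funext hflam₀
  obtain rfl : flam = expConv f lam := funext hflam
  have hm₀ : IsMaxOn (expConv f lam₀) univ x₀ := isMaxOn_univ_iff.2 hx₀
  have hm₁ : IsMaxOn (expConv f lam) univ x₁ := isMaxOn_univ_iff.2 hx₁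
  by_contra! hx₁₀
  have hgap : 0 ≤ expConvGap f lam₀ lam x₁ := by
    refine mul_nonneg (exp_pos _).le (sub_nonneg.2 ?_)
    rw [expConv_eq_of_isMaxOn hc hi (hlam₀.trans hlam) hm₁]
    exact expConv_le_of_isMaxOn_of_le hc hi hlam₀ hmon hanti hm₀ hx₁₀
  refine not_eqOn_expConv_Iio hc hi hlam₀ hpos x₁ <|
    eqOn_expConv_of_eqOn_expConvGap_zero hc hi hlam₀ hlam <|
    eqOn_expConvGap_zero_of_nonneg hdens_nonneg hc hi hmon hanti hlam₀ hlam hm₀ hx₁₀ hgap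

/-- With f a continuously differentiable probability density with bounded derivative,
positive for sufficiently small x and unimodal, and f_λ the density of X + λY with
Y ~ Exp(1) independent of X ~ f: if 0 < λ₀ < λ, then every mode (global maximizer)
of f_λ is strictly larger than every mode of f_{λ₀}. -/
theorem exp_convolution_mode_strict_mono
    (f : ℝ → ℝ)
    (hdens_nonneg : ∀ x, 0 ≤ f x)
    (hdens_int : ∫ x, f x = 1)
    (hC1 : ContDiff ℝ 1 f)
    (hbdd : ∃ C, ∀ x, |deriv f x| ≤ C)
    (hpos : ∃ x₁, ∀ x < x₁, 0 < f x)
    (a : ℝ)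
    (hmode : (∀ x < a, 0 ≤ deriv f x) ∧ (∀ x > a, deriv f x ≤ 0))
    (lam₀ lam : ℝ) (hlam₀ : 0 < lam₀) (hlam : lam₀ < lam)
    (flam₀ flam : ℝ → ℝ)
    (hflam₀ : ∀ x, flam₀ x
      = ∫ z in Set.Ioi (0:ℝ), f (x - z) * ((1 / lam₀) * Real.exp (-z / lam₀)))
    (hflam : ∀ x, flam x
      = ∫ z in Set.Ioi (0:ℝ), f (x - z) * ((1 / lam) * Real.exp (-z / lam)))
    (x₀ x₁ : ℝ)
    (hx₀ : ∀ x, flam₀ x ≤ flam₀ x₀)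
    (hx₁ : ∀ x, flam x ≤ flam x₁) :
    x₀ < x₁ :=
  exp_convolution_mode_strict_mono_general f hdens_nonneg hdens_int hC1 hpos a hmode lam₀ lam hlam₀
    hlam flam₀ flam hflam₀ hflam x₀ x₁ hx₀ hx₁
end

section
/- Let t₀ ≈ 1.2564 be the unique positive root of e^t = 1 + 2t. Define f(r) = P(G_r > r β) for r a positive integer, where G_r ~ Gamma(r,1) and β > 0. Then f(r) - f(r+1) = [(rβ)^r e^{-rβ}/Γ(r+1)] · [∫₀¹ (1 + y/r)^r e^{-yβ} β dy − 1]; moreover the bracketed quantity ∫₀¹ (1+y/r)^r e^{-yβ} β dy is strictly increasing in r, and if β > t₀ then f(1) > f(2). -/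
/-!
With `Γ(n+1, a) = ∫_a^∞ x^n e^{-x} dx` we have `f (n+1) = Γ(n+1, (n+1)β) / n!`. Integration by
parts gives `Γ(n+2, a) = a^{n+1} e^{-a} + (n+1) Γ(n+1, a)`; splitting `Γ(n+2, a)` at `a + β`, with
`a = (n+1)β`, leaves `(n+1)! (f(n+1) - f(n+2)) = ∫_a^{a+β} x^{n+1} e^{-x} dx - a^{n+1} e^{-a}`,
and the substitution `x = a + yβ` turns the integral into
`a^{n+1} e^{-a} ∫₀¹ (1 + y/(n+1))^{n+1} e^{-yβ} β dy`.
The integral increases with `r` because `(1 + y/r)^r` does (Bernoulli's inequality).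
Finally `f 1 = e^{-β}` and `f 2 = (1 + 2β) e^{-2β}`, so `f 1 > f 2` iff `1 + 2β < e^β`, which holds
for `β > t₀` since `e^t - 1 - 2t` is strictly convex and vanishes at `0` and at `t₀`.
-/

open MeasureTheory Set Real

-- `upperIncGamma n a` is the upper incomplete gamma function `Γ(n + 1, a)`.
noncomputable def upperIncGamma (n : ℕ) (a : ℝ) : ℝ := ∫ x in Ioi a, x ^ n * exp (-x)

lemma integrableOn_pow_mul_exp_neg_Ioi (n : ℕ) {a : ℝ} (ha : 0 ≤ a) :
    IntegrableOn (fun x : ℝ => x ^ n * exp (-x)) (Ioi a) := by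
  refine ((GammaIntegral_convergent (s := n + 1) (by positivity)).congr_fun (fun x _ => ?_)
    measurableSet_Ioi).mono_set (Ioi_subset_Ioi ha)
  simp [mul_comm]

lemma upperIncGamma_zero (a : ℝ) : upperIncGamma 0 a = exp (-a) := by
  simpa [upperIncGamma] using integral_exp_neg_Ioi a

lemma upperIncGamma_succ (n : ℕ) {a : ℝ} (ha : 0 ≤ a) :
    upperIncGamma (n + 1) a = a ^ (n + 1) * exp (-a) + (n + 1) * upperIncGamma n a := by
  have hderiv : ∀ x ∈ Ici a, HasDerivAt (fun x : ℝ => -(x ^ (n + 1) * exp (-x)))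
      (x ^ (n + 1) * exp (-x) - (n + 1) * (x ^ n * exp (-x))) x := by
    intro x _
    have hexp : HasDerivAt (fun x : ℝ => exp (-x)) (-exp (-x)) x := by
      simpa using (hasDerivAt_neg x).exp
    refine ((hasDerivAt_pow (n + 1) x).mul hexp).neg.congr_deriv ?_
    push_cast
    ring
  have hint := integrableOn_pow_mul_exp_neg_Ioi (n + 1) ha
  have hint' := (integrableOn_pow_mul_exp_neg_Ioi n ha).const_mul ((n : ℝ) + 1)
  have htendsto : Filter.Tendsto (fun x : ℝ => -(x ^ (n + 1) * exp (-x))) Filter.atTop (nhds 0) := by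
    simpa using (tendsto_pow_mul_exp_neg_atTop_nhds_zero (n + 1)).neg
  have h := integral_Ioi_of_hasDerivAt_of_tendsto' hderiv (hint.sub hint') htendsto
  rw [integral_sub hint hint', integral_const_mul] at h
  rw [upperIncGamma, upperIncGamma]
  linarith

lemma upperIncGamma_one {a : ℝ} (ha : 0 ≤ a) : upperIncGamma 1 a = (1 + a) * exp (-a) := by
  rw [upperIncGamma_succ 0 ha, upperIncGamma_zero]
  ring

lemma upperIncGamma_eq_intervalIntegral_add (n : ℕ) {a b : ℝ} (ha : 0 ≤ a) (hab : a ≤ b) :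
    upperIncGamma n a = (∫ x in a..b, x ^ n * exp (-x)) + upperIncGamma n b := by
  rw [upperIncGamma, upperIncGamma, intervalIntegral.integral_of_le hab,
    ← setIntegral_union (Ioc_disjoint_Ioi le_rfl) measurableSet_Ioi
      ((integrableOn_pow_mul_exp_neg_Ioi n ha).mono_set Ioc_subset_Ioi_self)
      (integrableOn_pow_mul_exp_neg_Ioi n (ha.trans hab)),
    Ioc_union_Ioi_eq_Ioi hab]

lemma succ_mul_upperIncGamma_sub_upperIncGamma_succ (n : ℕ) {a b : ℝ} (ha : 0 ≤ a)
    (hab : a ≤ b) :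
    (n + 1) * upperIncGamma n a - upperIncGamma (n + 1) b
      = (∫ x in a..b, x ^ (n + 1) * exp (-x)) - a ^ (n + 1) * exp (-a) := by
  linarith [upperIncGamma_succ n ha, upperIncGamma_eq_intervalIntegral_add (n + 1) ha hab]

lemma integral_pow_mul_exp_neg_eq (m : ℕ) {c : ℝ} (hc : c ≠ 0) (β : ℝ) :
    ∫ x in c * β..(c + 1) * β, x ^ m * exp (-x)
      = (c * β) ^ m * exp (-(c * β)) * ∫ y in (0:ℝ)..1, (1 + y / c) ^ m * exp (-y * β) * β := by
  have h := intervalIntegral.smul_integral_comp_mul_add (a := 0) (b := 1)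
    (fun x => x ^ m * exp (-x)) β (c * β)
  rw [mul_zero, zero_add, mul_one, add_comm β, ← add_one_mul, smul_eq_mul] at h
  rw [← h, ← intervalIntegral.integral_const_mul, ← intervalIntegral.integral_const_mul]
  refine intervalIntegral.integral_congr fun y _ => ?_
  have hx : β * y + c * β = c * β * (1 + y / c) := by field_simp; ring
  have hexp : exp (-(β * y + c * β)) = exp (-(c * β)) * exp (-y * β) := by
    rw [← exp_add]; ring_nf
  rw [hexp, hx, mul_pow]
  ring

lemma upperIncGamma_div_Gamma_sub_succ {β : ℝ} (hβ : 0 ≤ β) (n : ℕ) :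
    upperIncGamma n ((n + 1) * β) / Gamma (n + 1)
        - upperIncGamma (n + 1) ((n + 1 + 1) * β) / Gamma (n + 1 + 1)
      = ((n + 1) * β) ^ (n + 1) * exp (-((n + 1) * β)) / Gamma (n + 1 + 1)
          * ((∫ y in (0:ℝ)..1, (1 + y / (n + 1)) ^ (n + 1) * exp (-y * β) * β) - 1) := by
  have hΓ : Gamma (n + 1 + 1) = (n + 1) * Gamma (n + 1) := Gamma_add_one (by positivity)
  have key := succ_mul_upperIncGamma_sub_upperIncGamma_succ n (a := (n + 1) * β)
    (b := (n + 1 + 1) * β) (by positivity) (by nlinarith)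
  rw [integral_pow_mul_exp_neg_eq _ (by positivity) β] at key
  rw [hΓ, ← mul_div_mul_left (upperIncGamma n _) _ (by positivity : (n + 1 : ℝ) ≠ 0),
    div_sub_div_same, key]
  ring

lemma one_add_div_pow_lt_of_lt {y : ℝ} (hy : 0 < y) {r₁ r₂ : ℕ} (h1 : 0 < r₁) (h12 : r₁ < r₂) :
    (1 + y / r₁) ^ r₁ < (1 + y / r₂) ^ r₂ := by
  have hr₁ : (0 : ℝ) < r₁ := by exact_mod_cast h1
  have hr₂ : (0 : ℝ) < r₂ := by exact_mod_cast h1.trans h12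
  have hp : 1 < (r₂ : ℝ) / r₁ := (one_lt_div hr₁).2 (by exact_mod_cast h12)
  have hs : 0 < y / r₂ := by positivity
  have hbernoulli : 1 + y / r₁ < (1 + y / r₂) ^ ((r₂ : ℝ) / r₁) := by
    convert one_add_mul_self_lt_rpow_one_add (by linarith) hs.ne' hp using 2
    field_simp
  calc (1 + y / r₁) ^ r₁ < ((1 + y / r₂) ^ ((r₂ : ℝ) / r₁)) ^ r₁ :=
        pow_lt_pow_left₀ hbernoulli (by positivity) h1.ne'
    _ = (1 + y / r₂) ^ r₂ := by
        rw [← rpow_natCast _ r₁, ← rpow_mul (by positivity), div_mul_cancel₀ _ hr₁.ne',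
          rpow_natCast]

lemma integral_one_add_div_pow_mul_exp_lt {β : ℝ} (hβ : 0 < β) {r₁ r₂ : ℕ} (h1 : 0 < r₁)
    (h12 : r₁ < r₂) :
    (∫ y in (0:ℝ)..1, (1 + y / r₁) ^ r₁ * exp (-y * β) * β)
      < ∫ y in (0:ℝ)..1, (1 + y / r₂) ^ r₂ * exp (-y * β) * β := by
  have hlt : ∀ y : ℝ, 0 < y →
      (1 + y / r₁) ^ r₁ * exp (-y * β) * β < (1 + y / r₂) ^ r₂ * exp (-y * β) * β := fun y hy =>
    mul_lt_mul_of_pos_right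
      (mul_lt_mul_of_pos_right (one_add_div_pow_lt_of_lt hy h1 h12) (exp_pos _)) hβ
  refine intervalIntegral.integral_lt_integral_of_continuousOn_of_le_of_exists_lt one_pos
    (by fun_prop) (by fun_prop) (fun y hy => (hlt y hy.1).le) ⟨1, by simp, hlt 1 one_pos⟩

lemma one_add_two_mul_lt_exp {t₀ t : ℝ} (ht₀_pos : 0 < t₀) (ht₀ : exp t₀ = 1 + 2 * t₀)
    (ht : t₀ < t) : 1 + 2 * t < exp t := by
  have hslope := strictConvexOn_exp.slope_strict_mono_adjacent (mem_univ 0) (mem_univ t)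
    ht₀_pos ht
  rw [ht₀, exp_zero, sub_zero, add_sub_cancel_left, mul_div_cancel_right₀ _ ht₀_pos.ne',
    lt_div_iff₀ (sub_pos.2 ht)] at hslope
  linarith

lemma upperIncGamma_one_two_mul_lt {β : ℝ} (hβ : 0 ≤ β) (h : 1 + 2 * β < exp β) :
    upperIncGamma 1 (2 * β) < upperIncGamma 0 β := by
  rw [upperIncGamma_one (by positivity), upperIncGamma_zero]
  calc (1 + 2 * β) * exp (-(2 * β)) < exp β * exp (-(2 * β)) :=
        mul_lt_mul_of_pos_right h (exp_pos _)
    _ = exp (-β) := by rw [← exp_add]; ring_nf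

/-- Let t₀ > 0 be the root of e^t = 1 + 2t, β > 0, and f(r) = P(G_r > rβ) with
G_r ~ Gamma(r,1).  Then
f(r) - f(r+1) = [(rβ)^r e^{-rβ}/Γ(r+1)] [∫₀¹ (1+y/r)^r e^{-yβ} β dy − 1];
the integral ∫₀¹ (1+y/r)^r e^{-yβ} β dy is strictly increasing in r;
and if β > t₀ then f(1) > f(2). -/
theorem gamma_tail_difference
    (t₀ : ℝ) (ht₀_pos : 0 < t₀) (ht₀ : Real.exp t₀ = 1 + 2 * t₀)
    (β : ℝ) (hβ : 0 < β)
    (f : ℕ → ℝ)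
    (hf : ∀ r, f r = ∫ x in Set.Ioi ((r : ℝ) * β),
      x ^ (r - 1) * Real.exp (-x) / Real.Gamma r) :
    (∀ r : ℕ, 0 < r →
        f r - f (r + 1)
          = ((r : ℝ) * β) ^ r * Real.exp (-((r : ℝ) * β)) / Real.Gamma (r + 1)
              * ((∫ y in (0:ℝ)..1, (1 + y / r) ^ r * Real.exp (-y * β) * β) - 1))
      ∧ (∀ r₁ r₂ : ℕ, 0 < r₁ → r₁ < r₂ →
          (∫ y in (0:ℝ)..1, (1 + y / r₁) ^ r₁ * Real.exp (-y * β) * β)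
            < ∫ y in (0:ℝ)..1, (1 + y / r₂) ^ r₂ * Real.exp (-y * β) * β)
      ∧ (β > t₀ → f 1 > f 2) := by
  have hf' : ∀ r : ℕ, f r = upperIncGamma (r - 1) (r * β) / Gamma r := fun r => by
    rw [hf, upperIncGamma, integral_div]
  refine ⟨fun r hr => ?_, fun r₁ r₂ h1 h12 => integral_one_add_div_pow_mul_exp_lt hβ h1 h12,
    fun hβt => ?_⟩
  · obtain ⟨n, rfl⟩ := Nat.exists_eq_add_one_of_ne_zero hr.ne'
    rw [hf', hf']
    push_cast
    simpa using upperIncGamma_div_Gamma_sub_succ hβ.le n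
  · rw [hf', hf']
    simp only [Nat.cast_one, Nat.cast_ofNat, Nat.sub_self, Nat.add_one_sub_one, one_mul,
      Gamma_one, Gamma_two, div_one]
    exact upperIncGamma_one_two_mul_lt hβ.le (one_add_two_mul_lt_exp ht₀_pos ht₀ hβt)
end
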